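/- arXiv:2401.11958 — 4 statements merged into one kernel-verified Lean document; each statement's English description precedes it below -/
import Mathlib

section
/- Let μ^1,...,μ^N ∈ P(ℝ^T) be laws of martingales with respect to their canonical filtrations, and assume each restricted market is complete (every (F^i, μ^i)-martingale has a stochastic-integral representation against X^i). Let π be a coupling of μ^1,...,μ^N and let X = (X^1,...,X^N) be the ℝ^N-valued canonical process on (ℝ^T)^N with its generated filtration F^X. Then X is an (F^X, π)-martingale if and only if π is multicausal, i.e., for every i and every t, (X^i_1,...,X^i_T) is conditionally independent of {(X^j_1,...,X^j_t) : j ≠ i} given (X^i_1,...,X^i_t). -/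
/-!
By completeness of the `i`-th market, every integrable function `g` of the `i`-th path equals
`E[g | F^i_t]` plus a sum of increments `Δ_{k+1} (X^i_{k+1} - X^i_k)`, `k ≥ t`, with predictable
`Δ`. If `X^i` is an `F^X`-martingale, each increment has vanishing `F^X_t`-conditional
expectation, so conditioning on `F^X_t = F^i_t ∨ (other paths up to t)` gives the same as
conditioning on `F^i_t` alone, which is the conditional independence. Conversely, conditional
independence lets one replace `F^X_{s+1}` by `F^i_{s+1}` when conditioning `X^i_t`, and the
marginal law is a martingale.
-/

open MeasureTheory ProbabilityTheory

noncomputable section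

abbrev OTPath (T : ℕ) := Fin T → ℝ

/-- Evaluation of a path at an ℕ-index (zero-based; junk value `0` past the horizon). -/
def ev {T : ℕ} (x : OTPath T) (n : ℕ) : ℝ := if h : n < T then x ⟨n, h⟩ else 0

/-- Canonical filtration on the path space: σ-algebra generated by the first `t` coordinates. -/
def filt (T t : ℕ) : MeasurableSpace (OTPath T) :=
  ⨆ s : {s : Fin T // (s : ℕ) < t},
    MeasurableSpace.comap (fun x : OTPath T => x s.1) inferInstance

lemma filt_le (T t : ℕ) : filt T t ≤ (inferInstance : MeasurableSpace (OTPath T)) :=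
  iSup_le fun s => (measurable_pi_apply s.1).comap_le

/-- `μ` is the law of a process which is a martingale in its canonical filtration. -/
def IsMartLaw (T : ℕ) (μ : Measure (OTPath T)) [IsFiniteMeasure μ] : Prop :=
  (∀ t : ℕ, t < T → Integrable (fun x => ev x t) μ) ∧
  ∀ s t : ℕ, s ≤ t → t < T →
    μ[fun x => ev x t | filt T (s + 1)] =ᵐ[μ] fun x => ev x s

/-- A martingale (in the canonical filtration, under `μ`) on the path space. -/
def IsMart (T : ℕ) (μ : Measure (OTPath T)) [IsFiniteMeasure μ] (M : ℕ → OTPath T → ℝ) : Prop :=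
  (∀ t : ℕ, t < T → Measurable[filt T (t + 1)] (M t) ∧ Integrable (M t) μ) ∧
  ∀ s t : ℕ, s ≤ t → t < T → μ[M t | filt T (s + 1)] =ᵐ[μ] M s

/-- Completeness of the single-asset market with law `μ`: every martingale has a
stochastic-integral representation against the canonical process, where `X_0 := E[X_1]`. -/
def CompleteMarket (T : ℕ) (μ : Measure (OTPath T)) [IsFiniteMeasure μ] : Prop :=
  ∀ M : ℕ → OTPath T → ℝ, IsMart T μ M →
    ∃ Δ : ℕ → OTPath T → ℝ, (∀ s, Measurable[filt T s] (Δ s)) ∧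
      ∀ t : ℕ, t < T → M t =ᵐ[μ] fun x =>
        (∫ y, M 0 y ∂μ) + Δ 0 x * (ev x 0 - ∫ y, ev y 0 ∂μ) +
        ∑ s ∈ Finset.Icc 1 t, Δ s x * (ev x s - ev x (s - 1))

/-- σ-algebra generated by the first `t` coordinates of the `i`-th component process. -/
def filtI (N T : ℕ) (i : Fin N) (t : ℕ) : MeasurableSpace (Fin N → OTPath T) :=
  ⨆ s : {s : Fin T // (s : ℕ) < t},
    MeasurableSpace.comap (fun ω : Fin N → OTPath T => ω i s.1) inferInstance

lemma filtI_le (N T : ℕ) (i : Fin N) (t : ℕ) :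
    filtI N T i t ≤ (inferInstance : MeasurableSpace (Fin N → OTPath T)) :=
  iSup_le fun s => Measurable.comap_le ((measurable_pi_apply s.1).comp (measurable_pi_apply i) : Measurable fun ω : Fin N → OTPath T => ω i s.1)

/-- σ-algebra generated by the first `t` coordinates of all processes other than the `i`-th. -/
def filtOthers (N T : ℕ) (i : Fin N) (t : ℕ) : MeasurableSpace (Fin N → OTPath T) :=
  ⨆ j : {j : Fin N // j ≠ i}, filtI N T j.1 t

/-- The joint filtration `F^X` generated by all processes up to time `t`. -/
def filtJoint (N T : ℕ) (t : ℕ) : MeasurableSpace (Fin N → OTPath T) :=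
  ⨆ i : Fin N, filtI N T i t

open Set Filter

section ConditionalExpectation

variable {Ω : Type*} {m m' m₁ m₂ mΩ : MeasurableSpace Ω} {μ : Measure Ω}

theorem setIntegral_mul_condExp (hm : m ≤ mΩ) [SigmaFinite (μ.trim hm)] {g f : Ω → ℝ}
    (hg : StronglyMeasurable[m] g) (hgf : Integrable (g * f) μ) (hf : Integrable f μ)
    {A : Set Ω} (hA : MeasurableSet[m] A) :
    ∫ x in A, g x * μ[f | m] x ∂μ = ∫ x in A, g x * f x ∂μ := by
  calc ∫ x in A, g x * μ[f | m] x ∂μ = ∫ x in A, μ[g * f | m] x ∂μ :=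
        integral_congr_ae <| ae_restrict_of_ae
          (condExp_mul_of_stronglyMeasurable_left hg hgf hf).symm
    _ = ∫ x in A, g x * f x ∂μ := setIntegral_condExp hm hgf hA

theorem condExp_mul_ae_eq_zero [IsFiniteMeasure μ] (hmm' : m ≤ m') (hm' : m' ≤ mΩ)
    {H D : Ω → ℝ} (hH : StronglyMeasurable[m'] H) (hHD : Integrable (H * D) μ)
    (hD : Integrable D μ) (hD0 : μ[D | m'] =ᵐ[μ] 0) :
    μ[H * D | m] =ᵐ[μ] 0 := by
  have hpull : μ[H * D | m'] =ᵐ[μ] 0 := by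
    filter_upwards [condExp_mul_of_stronglyMeasurable_left hH hHD hD, hD0] with x hx hx0
    simp [hx, hx0]
  calc μ[H * D | m] =ᵐ[μ] μ[μ[H * D | m'] | m] := (condExp_condExp_of_le hmm' hm').symm
    _ =ᵐ[μ] μ[0 | m] := condExp_congr_ae hpull
    _ = 0 := condExp_zero

theorem ae_norm_condExp_indicator_le_one (s : Set Ω) : ∀ᵐ x ∂μ, ‖(μ⟦s | m⟧) x‖ ≤ 1 := by
  have hs : ∀ᵐ x ∂μ, |s.indicator (fun _ => (1 : ℝ)) x| ≤ 1 :=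
    ae_of_all _ fun x => by by_cases hx : x ∈ s <;> simp [hx]
  simpa only [Real.norm_eq_abs] using ae_bdd_abs_condExp_of_ae_bdd_abs (m := m) hs

theorem isPiSystem_image2_inter (m₁ m₂ : MeasurableSpace Ω) :
    IsPiSystem (image2 (· ∩ ·) {s | MeasurableSet[m₁] s} {t | MeasurableSet[m₂] t}) := by
  rintro _ ⟨s, hs, t, ht, rfl⟩ _ ⟨s', hs', t', ht', rfl⟩ _
  exact ⟨s ∩ s', hs.inter hs', t ∩ t', ht.inter ht', inter_inter_inter_comm s s' t t'⟩

theorem sup_eq_generateFrom_image2_inter (m₁ m₂ : MeasurableSpace Ω) :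
    m₁ ⊔ m₂ = MeasurableSpace.generateFrom
      (image2 (· ∩ ·) {s | MeasurableSet[m₁] s} {t | MeasurableSet[m₂] t}) := by
  refine le_antisymm (sup_le (fun s hs => ?_) (fun t ht => ?_)) (MeasurableSpace.generateFrom_le ?_)
  · exact MeasurableSpace.measurableSet_generateFrom ⟨s, hs, univ, .univ, inter_univ s⟩
  · exact MeasurableSpace.measurableSet_generateFrom ⟨univ, .univ, t, ht, univ_inter t⟩
  · rintro _ ⟨s, hs, t, ht, rfl⟩
    exact (le_sup_left (a := m₁) s hs).inter (le_sup_right (a := m₁) t ht)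

variable [StandardBorelSpace Ω] [IsFiniteMeasure μ]

theorem condExp_indicator_ae_eq_of_condIndep (hm' : m' ≤ mΩ) (hm'₁ : m' ≤ m₁) (hm₁ : m₁ ≤ mΩ)
    (hm₂ : m₂ ≤ mΩ) (h : CondIndep m' m₁ m₂ hm' μ) {B : Set Ω} (hB : MeasurableSet[m₂] B) :
    μ⟦B | m₁⟧ =ᵐ[μ] μ⟦B | m'⟧ := by
  have hB' := hm₂ B hB
  refine (ae_eq_condExp_of_forall_setIntegral_eq hm₁ ((integrable_const 1).indicator hB')
    (fun _ _ _ => integrable_condExp.integrableOn) (fun C hC _ => ?_)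
    (stronglyMeasurable_condExp.mono hm'₁).aestronglyMeasurable).symm
  have hC' := hm₁ C hC
  have hCB := (condIndep_iff m' m₁ m₂ hm' hm₁ hm₂ μ).mp h C B hC hB
  calc ∫ x in C, (μ⟦B | m'⟧) x ∂μ
      = ∫ x in univ, (μ⟦B | m'⟧) x * C.indicator (fun _ => (1 : ℝ)) x ∂μ := by
        rw [setIntegral_univ, ← integral_indicator hC']
        congr 1 with x
        by_cases hx : x ∈ C <;> simp [hx]
    _ = ∫ x in univ, (μ⟦B | m'⟧) x * (μ⟦C | m'⟧) x ∂μ :=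
        (setIntegral_mul_condExp hm' stronglyMeasurable_condExp
          (((integrable_const 1).indicator hC').bdd_mul integrable_condExp.aestronglyMeasurable
            (ae_norm_condExp_indicator_le_one B))
          ((integrable_const 1).indicator hC') MeasurableSet.univ).symm
    _ = ∫ x, (μ⟦C ∩ B | m'⟧) x ∂μ := by
        rw [setIntegral_univ]
        refine integral_congr_ae ?_
        filter_upwards [hCB] with x hx
        rw [hx, Pi.mul_apply, mul_comm]
    _ = ∫ x in C, B.indicator (fun _ => (1 : ℝ)) x ∂μ := by
        rw [integral_condExp hm', setIntegral_indicator hB', integral_indicator (hC'.inter hB'),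
          setIntegral_const]

theorem condExp_sup_ae_eq_of_condIndep (hm' : m' ≤ mΩ) (hm'₁ : m' ≤ m₁) (hm₁ : m₁ ≤ mΩ)
    (hm₂ : m₂ ≤ mΩ) (h : CondIndep m' m₁ m₂ hm' μ) {f : Ω → ℝ} (hf : StronglyMeasurable[m₁] f)
    (hfi : Integrable f μ) :
    μ[f | m' ⊔ m₂] =ᵐ[μ] μ[f | m'] := by
  have hsup : m' ⊔ m₂ ≤ mΩ := sup_le hm' hm₂
  refine (ae_eq_condExp_of_forall_setIntegral_eq hsup hfi
    (fun _ _ _ => integrable_condExp.integrableOn) (fun S hS _ => ?_)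
    (stronglyMeasurable_condExp.mono (le_sup_left (b := m₂))).aestronglyMeasurable).symm
  clear ‹μ S < ⊤›
  induction S, hS using MeasurableSpace.induction_on_inter
    (sup_eq_generateFrom_image2_inter m' m₂) (isPiSystem_image2_inter m' m₂) with
  | empty => simp
  | basic _ hS =>
    obtain ⟨A, hA, B, hB, rfl⟩ := hS
    have hB' := hm₂ B hB
    have hiB := (integrable_const (μ := μ) (1 : ℝ)).indicator hB'
    have hbB := ae_of_all μ fun x =>
      (norm_indicator_le_norm_self (s := B) (fun _ => (1 : ℝ)) x).trans_eq norm_one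
    have hinter : ∀ φ : Ω → ℝ,
        ∫ x in A ∩ B, φ x ∂μ = ∫ x in A, φ x * B.indicator (fun _ => (1 : ℝ)) x ∂μ := by
      intro φ
      rw [← setIntegral_indicator hB']
      congr 1 with x
      by_cases hx : x ∈ B <;> simp [hx]
    calc ∫ x in A ∩ B, μ[f | m'] x ∂μ
        = ∫ x in A, μ[f | m'] x * (μ⟦B | m'⟧) x ∂μ := by
          rw [hinter, setIntegral_mul_condExp hm' stronglyMeasurable_condExp
            (integrable_condExp.mul_bdd hiB.aestronglyMeasurable hbB) hiB hA]
      _ = ∫ x in A, (μ⟦B | m'⟧) x * f x ∂μ := by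
          simp_rw [mul_comm _ ((μ⟦B | m'⟧) _)]
          exact setIntegral_mul_condExp hm' stronglyMeasurable_condExp
            (hfi.bdd_mul integrable_condExp.aestronglyMeasurable
              (ae_norm_condExp_indicator_le_one B)) hfi hA
      _ = ∫ x in A, f x * (μ⟦B | m₁⟧) x ∂μ := by
          refine integral_congr_ae (ae_restrict_of_ae ?_)
          filter_upwards [condExp_indicator_ae_eq_of_condIndep hm' hm'₁ hm₁ hm₂ h hB] with x hx
          rw [hx, mul_comm]
      _ = ∫ x in A ∩ B, f x ∂μ := by
          rw [hinter, setIntegral_mul_condExp hm₁ hf (hfi.mul_bdd hiB.aestronglyMeasurable hbB)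
            hiB (hm'₁ A hA)]
  | compl S hS hSf =>
    have hS' := hsup S hS
    rw [setIntegral_compl hS' integrable_condExp, setIntegral_compl hS' hfi, hSf,
      integral_condExp hm']
  | iUnion S hdisj hS hSf =>
    rw [integral_iUnion (fun n => hsup _ (hS n)) hdisj integrable_condExp.integrableOn,
      integral_iUnion (fun n => hsup _ (hS n)) hdisj hfi.integrableOn]
    exact tsum_congr hSf

theorem condIndep_of_condExp_indicator_sup_ae_eq (hm' : m' ≤ mΩ) (hm₁ : m₁ ≤ mΩ)
    (hm₂ : m₂ ≤ mΩ) (h : ∀ C, MeasurableSet[m₁] C → μ⟦C | m' ⊔ m₂⟧ =ᵐ[μ] μ⟦C | m'⟧) :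
    CondIndep m' m₁ m₂ hm' μ := by
  refine (condIndep_iff m' m₁ m₂ hm' hm₁ hm₂ μ).mpr fun C B hC hB => ?_
  have hiC := (integrable_const (μ := μ) (1 : ℝ)).indicator (hm₁ C hC)
  have hiB := (integrable_const (μ := μ) (1 : ℝ)).indicator (hm₂ B hB)
  have hbB := ae_of_all μ fun x =>
    (norm_indicator_le_norm_self (s := B) (fun _ => (1 : ℝ)) x).trans_eq norm_one
  have hB : StronglyMeasurable[m' ⊔ m₂] (B.indicator fun _ => (1 : ℝ)) :=
    stronglyMeasurable_const.indicator (le_sup_right (a := m') B hB)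
  calc μ⟦C ∩ B | m'⟧
      = μ[(B.indicator fun _ => (1 : ℝ)) * C.indicator fun _ => (1 : ℝ) | m'] := by
        congr 1 with x
        by_cases hxC : x ∈ C <;> by_cases hxB : x ∈ B <;> simp [hxC, hxB]
    _ =ᵐ[μ] μ[μ[(B.indicator fun _ => (1 : ℝ)) * C.indicator fun _ => (1 : ℝ) | m' ⊔ m₂] | m'] :=
        (condExp_condExp_of_le le_sup_left (sup_le hm' hm₂)).symm
    _ =ᵐ[μ] μ[μ⟦C | m'⟧ * B.indicator fun _ => (1 : ℝ) | m'] := by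
        refine condExp_congr_ae ?_
        filter_upwards [condExp_mul_of_stronglyMeasurable_left hB
          (hiC.bdd_mul hiB.aestronglyMeasurable hbB) hiC, h C hC] with x hx hxC
        rw [hx, Pi.mul_apply, Pi.mul_apply, hxC, mul_comm]
    _ =ᵐ[μ] μ⟦C | m'⟧ * μ⟦B | m'⟧ :=
        condExp_mul_of_stronglyMeasurable_left stronglyMeasurable_condExp
          (hiB.bdd_mul integrable_condExp.aestronglyMeasurable
            (ae_norm_condExp_indicator_le_one C)) hiB

end ConditionalExpectation

section Transport

variable {Ω β : Type*} {mΩ : MeasurableSpace Ω} {m mβ : MeasurableSpace β} {μ : Measure Ω}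
  {ν : Measure β} [IsFiniteMeasure μ] {Y : Ω → β}

theorem condExp_comp_ae_eq (hY : Measurable Y) (hYν : μ.map Y = ν)
    (hm : m ≤ mβ) {g : β → ℝ} (hg : Integrable g ν) :
    μ[g ∘ Y | m.comap Y] =ᵐ[μ] ν[g | m] ∘ Y := by
  subst hYν
  have hcomap : m.comap Y ≤ mΩ := (MeasurableSpace.comap_mono hm).trans hY.comap_le
  refine (ae_eq_condExp_of_forall_setIntegral_eq hcomap (hg.comp_measurable hY)
    (fun _ _ _ => (integrable_condExp.comp_measurable hY).integrableOn) ?_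
    (stronglyMeasurable_condExp.comp_measurable (comap_measurable Y)).aestronglyMeasurable).symm
  rintro _ ⟨B, hB, rfl⟩ _
  calc ∫ x in Y ⁻¹' B, (μ.map Y)[g | m] (Y x) ∂μ = ∫ y in B, (μ.map Y)[g | m] y ∂μ.map Y :=
        (setIntegral_map (hm B hB) integrable_condExp.aestronglyMeasurable hY.aemeasurable).symm
    _ = ∫ y in B, g y ∂μ.map Y := setIntegral_condExp hm hg hB
    _ = ∫ x in Y ⁻¹' B, g (Y x) ∂μ :=
        setIntegral_map (hm B hB) hg.aestronglyMeasurable hY.aemeasurable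

end Transport

section PathSpace

variable {T : ℕ}

theorem filt_mono {s t : ℕ} (h : s ≤ t) : filt T s ≤ filt T t :=
  iSup_le fun u => le_iSup_of_le ⟨u.1, u.2.trans_le h⟩ le_rfl

theorem filt_self : filt T T = (inferInstance : MeasurableSpace (OTPath T)) :=
  le_antisymm (filt_le T T) <|
    iSup_le fun a => le_iSup_of_le (⟨a, a.isLt⟩ : {s : Fin T // (s : ℕ) < T}) le_rfl

theorem measurable_ev_filt {k t : ℕ} (h : k < t) :
    Measurable[filt T t] (fun x : OTPath T => ev x k) := by
  unfold ev
  split_ifs with hk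
  · exact Measurable.of_comap_le (le_iSup_of_le ⟨⟨k, hk⟩, h⟩ le_rfl)
  · exact measurable_const

theorem isMart_condExp {ν : Measure (OTPath T)} [IsFiniteMeasure ν] (g : OTPath T → ℝ) :
    IsMart T ν fun k => ν[g | filt T (k + 1)] :=
  ⟨fun _ _ => ⟨stronglyMeasurable_condExp.measurable, integrable_condExp⟩,
    fun _ _ hst _ => condExp_condExp_of_le (filt_mono (Nat.succ_le_succ hst)) (filt_le T _)⟩

theorem CompleteMarket.exists_increment_eq {ν : Measure (OTPath T)} [IsFiniteMeasure ν]
    (hc : CompleteMarket T ν) {M : ℕ → OTPath T → ℝ} (hM : IsMart T ν M) :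
    ∃ Δ : ℕ → OTPath T → ℝ, (∀ s, Measurable[filt T s] (Δ s)) ∧
      ∀ k, k + 1 < T → M (k + 1) - M k =ᵐ[ν] fun x => Δ (k + 1) x * (ev x (k + 1) - ev x k) := by
  obtain ⟨Δ, hΔ, hrep⟩ := hc M hM
  refine ⟨Δ, hΔ, fun k hk => ?_⟩
  filter_upwards [hrep (k + 1) hk, hrep k (by omega)] with x hx₁ hx₀
  rw [Pi.sub_apply, hx₁, hx₀, Finset.sum_Icc_succ_top (by omega), Nat.add_sub_cancel]
  ring

end PathSpace

section Representation

variable {Ω : Type*} {mΩ : MeasurableSpace Ω} {μ : Measure Ω} [IsFiniteMeasure μ] {T : ℕ}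
  {ν : Measure (OTPath T)} [IsFiniteMeasure ν] {Y : Ω → OTPath T}

/-- `𝔾 (k + 1)` and `filt T (k + 1)` see the coordinates `0, …, k`: they are the σ-algebras of
time `k`. -/
theorem condExp_comp_ae_eq_of_completeMarket (hY : Measurable Y) (hYν : μ.map Y = ν)
    (hint : ∀ k, k < T → Integrable (fun x => ev x k) ν) (hc : CompleteMarket T ν)
    (𝔾 : Filtration ℕ mΩ) (hY𝔾 : ∀ k, (filt T k).comap Y ≤ 𝔾 k)
    (hmart : ∀ k, k + 1 < T →
      μ[fun ω => ev (Y ω) (k + 1) | 𝔾 (k + 1)] =ᵐ[μ] fun ω => ev (Y ω) k)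
    {g : OTPath T → ℝ} (hg : Integrable g ν) {n : ℕ} (hn : n < T) :
    μ[g ∘ Y | 𝔾 (n + 1)] =ᵐ[μ] ν[g | filt T (n + 1)] ∘ Y := by
  subst hYν
  set M : ℕ → OTPath T → ℝ := fun k => (μ.map Y)[g | filt T (k + 1)]
  obtain ⟨Δ, hΔ, hincr⟩ := hc.exists_increment_eq (isMart_condExp g)
  have hYmeas : ∀ {k} {f : OTPath T → ℝ}, Measurable[filt T k] f →
      StronglyMeasurable[𝔾 k] fun ω => f (Y ω) :=
    fun hf => ((hf.comp (comap_measurable Y)).mono (hY𝔾 _) le_rfl).stronglyMeasurable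
  have hcomp : ∀ {f : OTPath T → ℝ}, Integrable f (μ.map Y) → Integrable (fun ω => f (Y ω)) μ :=
    fun hf => hf.comp_measurable hY
  have hgM : g ∘ Y =ᵐ[μ] M (T - 1) ∘ Y := by
    refine ae_eq_comp hY.aemeasurable ?_
    show g =ᵐ[μ.map Y] (μ.map Y)[g | filt T (T - 1 + 1)]
    rw [show T - 1 + 1 = T by omega, filt_self]
    exact (condExp_of_aestronglyMeasurable' le_rfl hg.aestronglyMeasurable hg).symm
  have htel : M (T - 1) = M n + ∑ k ∈ Finset.Ico n (T - 1), (M (k + 1) - M k) := by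
    rw [Finset.sum_Ico_sub M (by omega : n ≤ T - 1)]
    abel
  have hzero : ∀ k ∈ Finset.Ico n (T - 1),
      μ[(M (k + 1) - M k) ∘ Y | 𝔾 (n + 1)] =ᵐ[μ] 0 := by
    intro k hk
    rw [Finset.mem_Ico] at hk
    have hk₁ : k + 1 < T := by omega
    have hD : μ[fun ω => ev (Y ω) (k + 1) - ev (Y ω) k | 𝔾 (k + 1)] =ᵐ[μ] 0 := by
      have hprev : μ[fun ω => ev (Y ω) k | 𝔾 (k + 1)] = fun ω => ev (Y ω) k :=
        condExp_of_stronglyMeasurable (𝔾.le _) (hYmeas (measurable_ev_filt k.lt_succ_self))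
          (hcomp (hint k (by omega)))
      refine (condExp_sub (hcomp (hint (k + 1) hk₁)) (hcomp (hint k (by omega))) _).trans ?_
      rw [hprev]
      filter_upwards [hmart k hk₁] with ω hω
      simp [hω]
    have heq : (M (k + 1) - M k) ∘ Y =ᵐ[μ]
        (Δ (k + 1) ∘ Y) * fun ω => ev (Y ω) (k + 1) - ev (Y ω) k :=
      ae_eq_comp hY.aemeasurable (hincr k hk₁)
    refine (condExp_congr_ae heq).trans (condExp_mul_ae_eq_zero (𝔾.mono (by omega)) (𝔾.le _)
      (hYmeas (hΔ _)) ?_ ((hcomp (hint _ hk₁)).sub (hcomp (hint k (by omega)))) hD)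
    exact (hcomp (integrable_condExp.sub integrable_condExp)).congr heq
  calc μ[g ∘ Y | 𝔾 (n + 1)]
      =ᵐ[μ] μ[M n ∘ Y + ∑ k ∈ Finset.Ico n (T - 1), (M (k + 1) - M k) ∘ Y | 𝔾 (n + 1)] := by
        refine condExp_congr_ae (hgM.trans (Eventually.of_forall fun ω => ?_))
        simp [htel]
    _ =ᵐ[μ] M n ∘ Y + ∑ k ∈ Finset.Ico n (T - 1), μ[(M (k + 1) - M k) ∘ Y | 𝔾 (n + 1)] := by
        refine (condExp_add (hcomp integrable_condExp) (integrable_finsetSum' _ fun k _ =>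
          hcomp (integrable_condExp.sub integrable_condExp)) _).trans ?_
        rw [condExp_of_stronglyMeasurable (𝔾.le _) (hYmeas stronglyMeasurable_condExp.measurable)
          (hcomp integrable_condExp)]
        exact EventuallyEq.rfl.add (condExp_finsetSum (fun k _ =>
          hcomp (integrable_condExp.sub integrable_condExp)) _)
    _ =ᵐ[μ] M n ∘ Y := by
        filter_upwards [(eventually_all_finset _).mpr hzero] with ω hω
        simp [Finset.sum_apply, Finset.sum_eq_zero hω]

end Representation

section Coupling

variable {N T : ℕ}

theorem filtI_eq_comap (i : Fin N) (t : ℕ) :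
    filtI N T i t = (filt T t).comap fun ω : Fin N → OTPath T => ω i := by
  rw [filt, MeasurableSpace.comap_iSup]
  refine iSup_congr fun s => ?_
  rw [MeasurableSpace.comap_comp]
  rfl

theorem measurable_eval_filtI (i : Fin N) (t : ℕ) :
    Measurable[filtI N T i t, filt T t] fun ω : Fin N → OTPath T => ω i := by
  rw [filtI_eq_comap]
  exact comap_measurable _

theorem filtI_mono (i : Fin N) {s t : ℕ} (h : s ≤ t) : filtI N T i s ≤ filtI N T i t := by
  simpa only [filtI_eq_comap] using MeasurableSpace.comap_mono (filt_mono h)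

theorem filtOthers_le (i : Fin N) (t : ℕ) :
    filtOthers N T i t ≤ (inferInstance : MeasurableSpace (Fin N → OTPath T)) :=
  iSup_le fun j => filtI_le N T j.1 t

theorem filtI_le_filtJoint (i : Fin N) (t : ℕ) : filtI N T i t ≤ filtJoint N T t :=
  le_iSup (fun j => filtI N T j t) i

theorem filtJoint_eq_sup (i : Fin N) (t : ℕ) :
    filtJoint N T t = filtI N T i t ⊔ filtOthers N T i t := by
  refine le_antisymm (iSup_le fun j => ?_) (sup_le (filtI_le_filtJoint i t)
    (iSup_le fun j => filtI_le_filtJoint j.1 t))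
  by_cases hj : j = i
  · subst hj
    exact le_sup_left
  · exact (le_iSup (fun j : {j : Fin N // j ≠ i} => filtI N T j.1 t) ⟨j, hj⟩).trans le_sup_right

variable (N T) in
def jointFiltration : Filtration ℕ (inferInstance : MeasurableSpace (Fin N → OTPath T)) where
  seq := filtJoint N T
  mono' _ _ h := iSup_mono fun i => filtI_mono i h
  le' t := iSup_le fun i => filtI_le N T i t

variable {π : Measure (Fin N → OTPath T)} [IsFiniteMeasure π] {ν : Measure (OTPath T)}
  {i : Fin N}

theorem condExp_filtI_ae_eq (hπ : π.map (fun ω => ω i) = ν) (t : ℕ) {g : OTPath T → ℝ}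
    (hg : Integrable g ν) :
    π[fun ω => g (ω i) | filtI N T i t] =ᵐ[π] fun ω => ν[g | filt T t] (ω i) := by
  rw [filtI_eq_comap]
  exact condExp_comp_ae_eq (measurable_pi_apply i) hπ (filt_le T t) hg

theorem condIndep_of_martingale_filtJoint [IsFiniteMeasure ν] (hν : IsMartLaw T ν)
    (hc : CompleteMarket T ν) (hπ : π.map (fun ω => ω i) = ν)
    (hjoint : ∀ k, k + 1 < T →
      π[fun ω => ev (ω i) (k + 1) | filtJoint N T (k + 1)] =ᵐ[π] fun ω => ev (ω i) k)
    {t : ℕ} (ht₁ : 1 ≤ t) (htT : t ≤ T) :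
    CondIndep (filtI N T i t) (filtI N T i T) (filtOthers N T i t) (filtI_le N T i t) π := by
  refine condIndep_of_condExp_indicator_sup_ae_eq (filtI_le N T i t) (filtI_le N T i T)
    (filtOthers_le i t) fun C hC => ?_
  rw [← filtJoint_eq_sup]
  rw [filtI_eq_comap] at hC
  obtain ⟨D, hD, rfl⟩ := hC
  have hDi := (integrable_const (μ := ν) (1 : ℝ)).indicator (filt_le T T D hD)
  obtain ⟨n, rfl⟩ : ∃ n, t = n + 1 := ⟨t - 1, by omega⟩
  exact (condExp_comp_ae_eq_of_completeMarket (measurable_pi_apply i) hπ hν.1 hc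
    (jointFiltration N T) (fun k => filtI_eq_comap i k ▸ filtI_le_filtJoint i k) hjoint hDi
    (by omega)).trans (condExp_filtI_ae_eq hπ (n + 1) hDi).symm

theorem martingale_filtJoint_of_condIndep [IsFiniteMeasure ν] (hν : IsMartLaw T ν)
    (hπ : π.map (fun ω => ω i) = ν) {s t : ℕ} (hst : s ≤ t) (htT : t < T)
    (hci : CondIndep (filtI N T i (s + 1)) (filtI N T i T) (filtOthers N T i (s + 1))
      (filtI_le N T i (s + 1)) π) :
    π[fun ω => ev (ω i) t | filtJoint N T (s + 1)] =ᵐ[π] fun ω => ev (ω i) s := by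
  subst hπ
  have hint := hν.1 t htT
  rw [filtJoint_eq_sup i]
  refine (condExp_sup_ae_eq_of_condIndep (filtI_le N T i _) (filtI_mono i (by omega))
    (filtI_le N T i T) (filtOthers_le i _) hci
    ((measurable_ev_filt htT).comp (measurable_eval_filtI i T)).stronglyMeasurable
    (hint.comp_measurable (measurable_pi_apply i))).trans ?_
  exact (condExp_filtI_ae_eq rfl (s + 1) hint).trans
    (ae_eq_comp (measurable_pi_apply i).aemeasurable (hν.2 s t hst htT))

end Coupling

/-- A coupling of martingale laws of complete markets makes the joint canonical process
a martingale in the joint filtration iff it is multicausal. -/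
theorem martingale_iff_multicausal
    (N T : ℕ) (μ : Fin N → Measure (OTPath T)) [∀ i, IsProbabilityMeasure (μ i)]
    (hmart : ∀ i, IsMartLaw T (μ i))
    (hcomplete : ∀ i, CompleteMarket T (μ i))
    (π : Measure (Fin N → OTPath T)) [IsProbabilityMeasure π]
    (hmarg : ∀ i, π.map (fun ω => ω i) = μ i) :
    (∀ i : Fin N, ∀ s t : ℕ, s ≤ t → t < T →
        π[fun ω => ev (ω i) t | filtJoint N T (s + 1)] =ᵐ[π] fun ω => ev (ω i) s)
    ↔ (∀ i : Fin N, ∀ t : ℕ, 1 ≤ t → t ≤ T →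
        CondIndep (filtI N T i t) (filtI N T i T) (filtOthers N T i t) (filtI_le N T i t) π) :=
  ⟨fun hjoint i _ ht₁ htT => condIndep_of_martingale_filtJoint (hmart i) (hcomplete i) (hmarg i)
      (fun k hk => hjoint i k (k + 1) k.le_succ hk) ht₁ htT,
    fun hci i s _ hst htT => martingale_filtJoint_of_condIndep (hmart i) (hmarg i) hst htT
      (hci i (s + 1) (by omega) (by omega))⟩
end
end

section
/- Let Ṽ = (Ṽ_t)_{t=0}^T be an F^{X,Y}-adapted process with Ṽ_T = c quasi-surely with respect to the family of bicausal couplings of μ and ν. If Ṽ is an (F^{X,Y}, π)-submartingale for every bicausal coupling π and an (F^{X,Y}, π*)-martingale for some bicausal coupling π*, then Ṽ_0 equals the optimal bicausal transport cost V_0 and π* is an optimal bicausal coupling. -/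
open MeasureTheory ProbabilityTheory

noncomputable section

/-- Truncation of a path: keep the first `t` coordinates, set the rest to `0`. -/
def trunc {T : ℕ} (x : OTPath T) (t : ℕ) : OTPath T :=
  fun s => if (s : ℕ) < t then x s else 0

/-- Replace the coordinate at (zero-based) time `t` by `v`. -/
def set1 {T : ℕ} (x : OTPath T) (t : ℕ) (v : ℝ) : OTPath T :=
  fun s => if (s : ℕ) = t then v else x s

def filtFst (T t : ℕ) : MeasurableSpace (OTPath T × OTPath T) :=
  (filt T t).comap Prod.fst

def filtSnd (T t : ℕ) : MeasurableSpace (OTPath T × OTPath T) :=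
  (filt T t).comap Prod.snd

lemma filtFst_le (T t : ℕ) :
    filtFst T t ≤ (inferInstance : MeasurableSpace (OTPath T × OTPath T)) :=
  (MeasurableSpace.comap_mono (filt_le T t)).trans (measurable_iff_comap_le.mp measurable_fst)

lemma filtSnd_le (T t : ℕ) :
    filtSnd T t ≤ (inferInstance : MeasurableSpace (OTPath T × OTPath T)) :=
  (MeasurableSpace.comap_mono (filt_le T t)).trans (measurable_iff_comap_le.mp measurable_snd)

/-- The filtration `F^{X,Y}` generated by the canonical pair process. -/
def prodFilt (T t : ℕ) : MeasurableSpace (OTPath T × OTPath T) :=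
  filtFst T t ⊔ filtSnd T t

def CausalMeasure (T : ℕ) (π : Measure (OTPath T × OTPath T)) [IsFiniteMeasure π] : Prop :=
  ∀ t : ℕ, 1 ≤ t → t ≤ T - 1 →
    CondIndep (filtFst T t) (filtFst T T) (filtSnd T t) (filtFst_le T t) π

def AntiCausalMeasure (T : ℕ) (π : Measure (OTPath T × OTPath T)) [IsFiniteMeasure π] : Prop :=
  ∀ t : ℕ, 1 ≤ t → t ≤ T - 1 →
    CondIndep (filtSnd T t) (filtSnd T T) (filtFst T t) (filtSnd_le T t) π

def BicausalMeasure (T : ℕ) (π : Measure (OTPath T × OTPath T)) [IsFiniteMeasure π] : Prop :=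
  CausalMeasure T π ∧ AntiCausalMeasure T π


/-- The set of bicausal couplings of `μ` and `ν`. -/
def BicausalCpl (T : ℕ) (μ ν : Measure (OTPath T)) :
    Set (ProbabilityMeasure (OTPath T × OTPath T)) :=
  {p | (p : Measure (OTPath T × OTPath T)).fst = μ ∧
       (p : Measure (OTPath T × OTPath T)).snd = ν ∧
       BicausalMeasure T (p : Measure (OTPath T × OTPath T))}

lemma prodFilt_zero (T : ℕ) : prodFilt T 0 = ⊥ := by
  have hfilt : filt T 0 = ⊥ := by
    have : IsEmpty {s : Fin T // (s : ℕ) < 0} := ⟨fun s => Nat.not_lt_zero _ s.2⟩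
    exact iSup_of_empty _
  simp [prodFilt, filtFst, filtSnd, hfilt, MeasurableSpace.comap_bot]

/-- A verification theorem: an adapted process with terminal value `c` (quasi-surely) which is
a submartingale under every bicausal coupling and a martingale under some bicausal coupling
`π*` identifies the optimal value, and `π*` is an optimal bicausal coupling. -/
theorem verification_theorem
    (T : ℕ) (μ ν : Measure (OTPath T)) [IsProbabilityMeasure μ] [IsProbabilityMeasure ν]
    (c : OTPath T → OTPath T → ℝ)
    (hcmeas : Measurable (fun p : OTPath T × OTPath T => c p.1 p.2))
    (hc0 : ∀ x y, 0 ≤ c x y)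
    (V' : ℕ → OTPath T × OTPath T → ℝ)
    -- adapted
    (hadapted : ∀ t : ℕ, t ≤ T → StronglyMeasurable[prodFilt T t] (V' t))
    -- terminal value `c`, quasi-surely w.r.t. the bicausal couplings
    (hterm : ∃ B : Set (OTPath T × OTPath T), MeasurableSet B ∧
      (∀ p ∈ BicausalCpl T μ ν, (p : Measure (OTPath T × OTPath T)) B = 0) ∧
      ∀ ω ∉ B, V' T ω = c ω.1 ω.2)
    -- submartingale under every bicausal coupling
    (hsub : ∀ p ∈ BicausalCpl T μ ν,
      (∀ t : ℕ, t ≤ T → Integrable (V' t) (p : Measure (OTPath T × OTPath T))) ∧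
      ∀ s t : ℕ, s ≤ t → t ≤ T →
        V' s ≤ᵐ[(p : Measure (OTPath T × OTPath T))]
          (p : Measure (OTPath T × OTPath T))[V' t | prodFilt T s])
    -- martingale under some bicausal coupling π*
    (πs : ProbabilityMeasure (OTPath T × OTPath T)) (hπs : πs ∈ BicausalCpl T μ ν)
    (hmart : ∀ s t : ℕ, s ≤ t → t ≤ T →
      (πs : Measure (OTPath T × OTPath T))[V' t | prodFilt T s]
        =ᵐ[(πs : Measure (OTPath T × OTPath T))] V' s) :
    (∀ ω : OTPath T × OTPath T, V' 0 ω =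
        ⨅ p : BicausalCpl T μ ν,
          ∫ ω' : OTPath T × OTPath T, c ω'.1 ω'.2 ∂(p.1 : Measure (OTPath T × OTPath T))) ∧
    (∫ ω : OTPath T × OTPath T, c ω.1 ω.2 ∂(πs : Measure (OTPath T × OTPath T)) =
        ⨅ p : BicausalCpl T μ ν,
          ∫ ω' : OTPath T × OTPath T, c ω'.1 ω'.2 ∂(p.1 : Measure (OTPath T × OTPath T))) := by
  -- V' 0 is constant
  have hbot : StronglyMeasurable[⊥] (V' 0) := by
    rw [← prodFilt_zero T]; exact hadapted 0 (Nat.zero_le T)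
  obtain ⟨k, hk⟩ := stronglyMeasurable_bot_iff.mp hbot
  obtain ⟨B, hBmeas, hBnull, hBeq⟩ := hterm
  have hm0 : prodFilt T 0 ≤ (inferInstance : MeasurableSpace (OTPath T × OTPath T)) :=
    sup_le (filtFst_le T 0) (filtSnd_le T 0)
  -- For each bicausal coupling, V' T = c a.e. and k ≤ ∫ c
  have hVTc : ∀ p ∈ BicausalCpl T μ ν,
      V' T =ᵐ[(p : Measure (OTPath T × OTPath T))] fun ω => c ω.1 ω.2 := by
    intro p hp
    have hae : ∀ᵐ ω ∂(p : Measure (OTPath T × OTPath T)), ω ∉ B := by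
      rw [ae_iff]
      refine measure_mono_null (fun ω h => ?_) (hBnull p hp)
      simpa using h
    exact hae.mono fun ω hω => hBeq ω hω
  have hcInt : ∀ p ∈ BicausalCpl T μ ν,
      Integrable (fun ω : OTPath T × OTPath T => c ω.1 ω.2)
        (p : Measure (OTPath T × OTPath T)) := by
    intro p hp
    exact ((hsub p hp).1 T le_rfl).congr (hVTc p hp)
  have hIntc : ∀ p ∈ BicausalCpl T μ ν,
      ∫ ω : OTPath T × OTPath T, c ω.1 ω.2 ∂(p : Measure (OTPath T × OTPath T))
        = ∫ ω, V' T ω ∂(p : Measure (OTPath T × OTPath T)) := by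
    intro p hp
    exact integral_congr_ae (hVTc p hp).symm
  have hintV0 : ∀ p : ProbabilityMeasure (OTPath T × OTPath T),
      ∫ ω, V' 0 ω ∂(p : Measure (OTPath T × OTPath T)) = k := by
    intro p
    rw [hk]
    simp
  have hlow : ∀ p ∈ BicausalCpl T μ ν,
      k ≤ ∫ ω : OTPath T × OTPath T, c ω.1 ω.2 ∂(p : Measure (OTPath T × OTPath T)) := by
    intro p hp
    have hle := (hsub p hp).2 0 T (Nat.zero_le T) le_rfl
    have hint0 := (hsub p hp).1 0 (Nat.zero_le T)
    have hintT := (hsub p hp).1 T le_rfl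
    have h1 : ∫ ω, V' 0 ω ∂(p : Measure (OTPath T × OTPath T))
        ≤ ∫ ω, ((p : Measure (OTPath T × OTPath T))[V' T | prodFilt T 0]) ω
            ∂(p : Measure (OTPath T × OTPath T)) :=
      integral_mono_ae hint0 integrable_condExp hle
    rw [integral_condExp hm0] at h1
    rw [hIntc p hp]
    rw [hintV0 p] at h1
    exact h1
  have hstar : ∫ ω : OTPath T × OTPath T, c ω.1 ω.2 ∂(πs : Measure (OTPath T × OTPath T)) = k := by
    have h1 := hmart 0 T (Nat.zero_le T) le_rfl
    have h2 : ∫ ω, ((πs : Measure (OTPath T × OTPath T))[V' T | prodFilt T 0]) ω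
        ∂(πs : Measure (OTPath T × OTPath T))
        = ∫ ω, V' 0 ω ∂(πs : Measure (OTPath T × OTPath T)) := integral_congr_ae h1
    rw [integral_condExp hm0] at h2
    rw [hIntc πs hπs, h2, hintV0]
  -- the infimum computation
  haveI : Nonempty (BicausalCpl T μ ν) := ⟨⟨πs, hπs⟩⟩
  have hbdd : BddBelow (Set.range fun p : BicausalCpl T μ ν =>
      ∫ ω' : OTPath T × OTPath T, c ω'.1 ω'.2 ∂(p.1 : Measure (OTPath T × OTPath T))) := by
    refine ⟨k, ?_⟩
    rintro x ⟨p, rfl⟩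
    exact hlow p.1 p.2
  have hinf : (⨅ p : BicausalCpl T μ ν,
      ∫ ω' : OTPath T × OTPath T, c ω'.1 ω'.2 ∂(p.1 : Measure (OTPath T × OTPath T))) = k := by
    refine le_antisymm ?_ (le_ciInf fun p => hlow p.1 p.2)
    calc (⨅ p : BicausalCpl T μ ν,
        ∫ ω' : OTPath T × OTPath T, c ω'.1 ω'.2 ∂(p.1 : Measure (OTPath T × OTPath T)))
        ≤ ∫ ω' : OTPath T × OTPath T, c ω'.1 ω'.2 ∂(πs : Measure (OTPath T × OTPath T)) :=
          ciInf_le hbdd ⟨πs, hπs⟩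
      _ = k := hstar
  constructor
  · intro ω
    rw [hinf, hk]
  · rw [hinf, hstar]
end
end

section
/- Measurable Komlós-type lemma with parameters: Let (X, F^X) and (Y, F^Y) be standard Borel spaces, Y^n : X × Y → ℝ measurable (n ∈ ℕ), P : X → P(Y) a measurable kernel, and C : X × Y → ℝ measurable with inf_n Y^n(x,·) ≥ C(x,·) P(x)-a.s. for every x ∈ X. Then there exist measurable functions Ỹ^n : X × Y → ℝ and Ỹ : X × Y → ℝ ∪ {+∞}, and measurable weights λ^n_k : X → [0,1] summing to 1 in k, such that Ỹ^n(x,·) = Σ_k λ^n_k(x) Y^k(x,·) lies in the convex hull of {Y^n(x,·), Y^{n+1}(x,·), ...} for every x, and for every x ∈ X, Ỹ^n(x, y) → Ỹ(x, y) for P(x)-almost every y ∈ Y. -/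
/-!
Replace `Y^n` by `f^n = (Y^n - C)⁺ ≥ 0`, which equals `Y^n - C` almost surely. For fixed `x`,
minimise `E_{P x}[exp (-g)]` over rational convex combinations `g` of `f^n, f^{n+1}, …`; these
infima increase with `n` to a finite limit. Pick, measurably in `x` (there are only countably many
rational weight vectors, so a `Nat.find` over an enumeration is measurable), combinations `g_j`
whose cost is within `4^{-j}` of that limit. Their midpoints are admissible competitors, and
`(e^{-a} + e^{-b})/2 - e^{-(a+b)/2} = (e^{-a/2} - e^{-b/2})^2/2` turns this near-optimality into
`E[(e^{-g_i} - e^{-g_j})^2] ≤ 16 · 4^{-i}` for `i ≤ j`. Hence `e^{-g_j}` converges almost surely,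
i.e. `g_j` converges in `[0, ∞]`.
-/

open MeasureTheory ProbabilityTheory Filter Topology Real
open scoped ENNReal

noncomputable section

lemma measurable_comp_index {α β ι : Type*} [MeasurableSpace α] [MeasurableSpace β]
    [MeasurableSpace ι] [Countable ι] [MeasurableSingletonClass ι] {F : ι → α → β}
    (hF : ∀ i, Measurable (F i)) {N : α → ι} (hN : Measurable N) :
    Measurable fun a => F (N a) a :=
  (measurable_from_prod_countable_right (f := fun p : ι × α => F p.1 p.2) hF).comp
    (hN.prodMk measurable_id)

lemma exp_neg_eq_sq (a : ℝ) : exp (-a) = exp (-(a / 2)) ^ 2 := by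
  rw [← exp_nat_mul]; ring_nf

lemma exp_neg_midpoint_add_sq (a b : ℝ) :
    exp (-((a + b) / 2)) + (exp (-(a / 2)) - exp (-(b / 2))) ^ 2 / 2
      = (exp (-a) + exp (-b)) / 2 := by
  rw [exp_neg_eq_sq a, exp_neg_eq_sq b, show -((a + b) / 2) = -(a / 2) + -(b / 2) by ring,
    exp_add]
  ring

lemma sq_exp_neg_sub_le {a b : ℝ} (ha : 0 ≤ a) (hb : 0 ≤ b) :
    (exp (-a) - exp (-b)) ^ 2 ≤ 4 * (exp (-(a / 2)) - exp (-(b / 2))) ^ 2 := by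
  have hp : exp (-(a / 2)) ≤ 1 := exp_le_one_iff.2 (by linarith)
  have hq : exp (-(b / 2)) ≤ 1 := exp_le_one_iff.2 (by linarith)
  have hsum : (exp (-(a / 2)) + exp (-(b / 2))) ^ 2 ≤ 4 := by
    nlinarith [exp_pos (-(a / 2)), exp_pos (-(b / 2))]
  calc (exp (-a) - exp (-b)) ^ 2
      = (exp (-(a / 2)) - exp (-(b / 2))) ^ 2 * (exp (-(a / 2)) + exp (-(b / 2))) ^ 2 := by
        rw [exp_neg_eq_sq a, exp_neg_eq_sq b]; ring
    _ ≤ (exp (-(a / 2)) - exp (-(b / 2))) ^ 2 * 4 := by gcongr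
    _ = 4 * (exp (-(a / 2)) - exp (-(b / 2))) ^ 2 := mul_comm _ _

lemma tendsto_coe_ereal_of_tendsto_exp_neg {ι : Type*} {u : Filter ι} {g : ι → ℝ} {l : ℝ}
    (h : Tendsto (fun i => exp (-g i)) u (𝓝 l)) :
    Tendsto (fun i => (g i : EReal)) u (𝓝 (-ENNReal.log (ENNReal.ofReal l))) := by
  have hg : ∀ i, (g i : EReal) = -ENNReal.log (ENNReal.ofReal (exp (-g i))) := fun i => by
    rw [ENNReal.log_ofReal_of_pos (exp_pos _), log_exp, EReal.coe_neg, neg_neg]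
  simp_rw [hg]
  exact (continuous_neg.tendsto _).comp
    ((ENNReal.continuous_log.tendsto _).comp (ENNReal.tendsto_ofReal h))

lemma inv_four_pow_anti {i j : ℕ} (hij : i ≤ j) : (4⁻¹ : ℝ≥0∞) ^ j ≤ 4⁻¹ ^ i :=
  pow_le_pow_of_le_one zero_le (ENNReal.inv_le_one.2 (by norm_num)) hij

section

variable {α : Type*} [MeasurableSpace α] {μ : Measure α}

lemma lintegral_ofReal_exp_neg_le_measure_univ {g : α → ℝ} (hg : 0 ≤ g) :
    ∫⁻ a, .ofReal (exp (-g a)) ∂μ ≤ μ Set.univ :=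
  (lintegral_mono fun a =>
    ENNReal.ofReal_le_one.2 (exp_le_one_iff.2 (by simpa using hg a))).trans_eq lintegral_one

lemma lintegral_sq_exp_neg_sub_le [IsFiniteMeasure μ] {g₁ g₂ : α → ℝ}
    (hg₁ : Measurable g₁) (hg₂ : Measurable g₂) (hg₁₀ : 0 ≤ g₁) (hg₂₀ : 0 ≤ g₂) {δ : ℝ≥0∞}
    (h : (∫⁻ a, .ofReal (exp (-g₁ a)) ∂μ + ∫⁻ a, .ofReal (exp (-g₂ a)) ∂μ) / 2
      ≤ ∫⁻ a, .ofReal (exp (-((g₁ a + g₂ a) / 2))) ∂μ + δ) :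
    ∫⁻ a, .ofReal ((exp (-g₁ a) - exp (-g₂ a)) ^ 2) ∂μ ≤ 8 * δ := by
  set G : α → ℝ := fun a => (exp (-(g₁ a / 2)) - exp (-(g₂ a / 2))) ^ 2 / 2
  have hGm : Measurable fun a => ENNReal.ofReal (G a) := by fun_prop
  have hmid : ∫⁻ a, .ofReal (exp (-((g₁ a + g₂ a) / 2))) ∂μ ≠ ∞ :=
    ne_top_of_le_ne_top (measure_ne_top μ Set.univ)
      (lintegral_ofReal_exp_neg_le_measure_univ fun a => by
        have := hg₁₀ a; have := hg₂₀ a; simp only [Pi.zero_apply] at *; positivity)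
  have hsplit : ∫⁻ a, .ofReal (exp (-((g₁ a + g₂ a) / 2))) ∂μ + ∫⁻ a, .ofReal (G a) ∂μ
      = (∫⁻ a, .ofReal (exp (-g₁ a)) ∂μ + ∫⁻ a, .ofReal (exp (-g₂ a)) ∂μ) / 2 := by
    rw [← lintegral_add_right _ hGm]
    simp_rw [ENNReal.div_eq_inv_mul]
    rw [← lintegral_add_right _ (by fun_prop), ← lintegral_const_mul _ (by fun_prop)]
    refine lintegral_congr fun a => ?_
    rw [← ENNReal.ofReal_add (exp_pos _).le (by positivity), exp_neg_midpoint_add_sq,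
      ← ENNReal.ofReal_add (exp_pos _).le (exp_pos _).le, div_eq_inv_mul,
      ENNReal.ofReal_mul (by norm_num), ENNReal.ofReal_inv_of_pos (by norm_num),
      ENNReal.ofReal_ofNat]
  have hGint : ∫⁻ a, .ofReal (G a) ∂μ ≤ δ :=
    (ENNReal.add_le_add_iff_left hmid).1 (hsplit ▸ h)
  calc ∫⁻ a, .ofReal ((exp (-g₁ a) - exp (-g₂ a)) ^ 2) ∂μ
      ≤ ∫⁻ a, 8 * .ofReal (G a) ∂μ := lintegral_mono fun a => by
        rw [← ENNReal.ofReal_ofNat 8, ← ENNReal.ofReal_mul (by norm_num)]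
        refine ENNReal.ofReal_le_ofReal ?_
        have := sq_exp_neg_sub_le (hg₁₀ a) (hg₂₀ a)
        simp only [G]
        linarith
    _ = 8 * ∫⁻ a, .ofReal (G a) ∂μ := lintegral_const_mul _ hGm
    _ ≤ 8 * δ := by gcongr

lemma edist_le_inv_two_pow_add (x y : ℝ) (i : ℕ) :
    edist x y ≤ 2⁻¹ ^ i + 2 ^ i * .ofReal ((x - y) ^ 2) := by
  have ht : (0 : ℝ) < 2 ^ i := by positivity
  have hreal : |x - y| ≤ (2 ^ i)⁻¹ + 2 ^ i * (x - y) ^ 2 := by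
    have hs : 2 ^ i * |x - y| ≤ 1 + (2 ^ i * |x - y|) ^ 2 := by
      nlinarith [sq_nonneg (2 ^ i * |x - y| - 1)]
    calc |x - y| = (2 ^ i)⁻¹ * (2 ^ i * |x - y|) := by field_simp
      _ ≤ (2 ^ i)⁻¹ * (1 + (2 ^ i * |x - y|) ^ 2) := by gcongr
      _ = (2 ^ i)⁻¹ + 2 ^ i * (x - y) ^ 2 := by rw [mul_pow, sq_abs]; field_simp
  rw [edist_dist, Real.dist_eq]
  refine (ENNReal.ofReal_le_ofReal hreal).trans_eq ?_
  rw [ENNReal.ofReal_add (by positivity) (by positivity), ENNReal.ofReal_mul ht.le,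
    ENNReal.ofReal_inv_of_pos ht, ENNReal.ofReal_pow zero_le_two, ENNReal.ofReal_ofNat,
    ENNReal.inv_pow]

lemma ae_exists_tendsto_of_lintegral_sq_sub_le [IsFiniteMeasure μ] {v : ℕ → α → ℝ}
    (hv : ∀ i, Measurable (v i)) {C : ℝ≥0∞} (hC : C ≠ ∞)
    (h : ∀ i, ∫⁻ a, .ofReal ((v i a - v (i + 1) a) ^ 2) ∂μ ≤ C * 4⁻¹ ^ i) :
    ∀ᵐ a ∂μ, ∃ l, Tendsto (fun i => v i a) atTop (𝓝 l) := by
  have h42 : ∀ i : ℕ, (2 : ℝ≥0∞) ^ i * 4⁻¹ ^ i = 2⁻¹ ^ i := fun i => by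
    rw [← mul_pow]; congr 1
    rw [show (4 : ℝ≥0∞) = 2 * 2 by norm_num, ENNReal.mul_inv (by simp) (by simp), ← mul_assoc,
      ENNReal.mul_inv_cancel two_ne_zero ENNReal.ofNat_ne_top, one_mul]
  -- `edist_le_inv_two_pow_add` turns the `L²` rate `4^{-i}` into the summable `L¹` rate `2^{-i}`.
  have hint : ∫⁻ a, ∑' i, edist (v i a) (v (i + 1) a) ∂μ ≠ ∞ := by
    rw [lintegral_tsum fun i => by fun_prop]
    refine ne_top_of_le_ne_top (b := ∑' i, (μ Set.univ + C) * 2⁻¹ ^ i) ?_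
      (ENNReal.tsum_le_tsum fun i => ?_)
    · rw [ENNReal.tsum_mul_left, ENNReal.tsum_geometric, ENNReal.one_sub_inv_two, inv_inv]
      exact ENNReal.mul_ne_top (ENNReal.add_ne_top.2 ⟨measure_ne_top μ _, hC⟩) ENNReal.ofNat_ne_top
    calc ∫⁻ a, edist (v i a) (v (i + 1) a) ∂μ
        ≤ ∫⁻ a, 2⁻¹ ^ i + 2 ^ i * .ofReal ((v i a - v (i + 1) a) ^ 2) ∂μ :=
          lintegral_mono fun a => edist_le_inv_two_pow_add _ _ i
      _ = 2⁻¹ ^ i * μ Set.univ + 2 ^ i * ∫⁻ a, .ofReal ((v i a - v (i + 1) a) ^ 2) ∂μ := by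
          rw [lintegral_add_right _ (by fun_prop), lintegral_const,
            lintegral_const_mul _ (by fun_prop)]
      _ ≤ 2⁻¹ ^ i * μ Set.univ + 2 ^ i * (C * 4⁻¹ ^ i) := by gcongr; exact h i
      _ = (μ Set.univ + C) * 2⁻¹ ^ i := by rw [mul_left_comm, h42]; ring
  filter_upwards [ae_lt_top (by fun_prop) hint] with a ha
  exact cauchySeq_tendsto_of_complete
    (cauchySeq_of_edist_le_of_tsum_ne_top _ (fun i => le_rfl) ha.ne)

end

namespace Komlos

def tailWeights (n : ℕ) : Set (ℕ →₀ ℚ) :=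
  {w | (∀ k, 0 ≤ w k) ∧ (w.sum fun _ c => c) = 1 ∧ ∀ k < n, w k = 0}

lemma single_mem_tailWeights (n : ℕ) : Finsupp.single n 1 ∈ tailWeights n :=
  ⟨fun k => by simp [Finsupp.single_apply]; split_ifs <;> norm_num, by simp,
    fun k hk => Finsupp.single_eq_of_ne hk.ne⟩

lemma tailWeights_antitone : Antitone tailWeights :=
  fun _ _ hmn _ ⟨h₀, h₁, h⟩ => ⟨h₀, h₁, fun k hk => h k (hk.trans_le hmn)⟩

lemma convex_tailWeights (n : ℕ) : Convex ℚ (tailWeights n) := by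
  intro w₁ h₁ w₂ h₂ a b ha hb hab
  refine ⟨fun k => ?_, ?_, fun k hk => by simp [h₁.2.2 k hk, h₂.2.2 k hk]⟩
  · have := h₁.1 k; have := h₂.1 k
    simp only [Finsupp.coe_add, Finsupp.coe_smul, Pi.add_apply, Pi.smul_apply, smul_eq_mul]
    positivity
  · rw [Finsupp.sum_add_index' (fun _ => rfl) (fun _ _ _ => rfl),
      Finsupp.sum_smul_index' (fun _ => rfl), Finsupp.sum_smul_index' (fun _ => rfl)]
    simp_rw [smul_eq_mul]
    rw [← Finsupp.mul_sum, ← Finsupp.mul_sum, h₁.2.1, h₂.2.1, mul_one, mul_one, hab]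

lemma le_one_of_mem_tailWeights {n : ℕ} {w : ℕ →₀ ℚ} (hw : w ∈ tailWeights n) (k : ℕ) :
    w k ≤ 1 := by
  by_cases hk : k ∈ w.support
  · rw [← hw.2.1]
    exact Finset.single_le_sum (f := fun k => w k) (fun i _ => hw.1 i) hk
  · rw [Finsupp.notMem_support_iff.1 hk]; exact zero_le_one

lemma tsum_cast_mul (w : ℕ →₀ ℚ) (v : ℕ → ℝ) :
    ∑' k, (w k : ℝ) * v k = w.sum fun k c => c * v k :=
  tsum_eq_sum fun k hk => by simp [Finsupp.notMem_support_iff.1 hk]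

lemma tsum_cast_eq_one_of_mem_tailWeights {n : ℕ} {w : ℕ →₀ ℚ} (hw : w ∈ tailWeights n) :
    ∑' k, (w k : ℝ) = 1 := by
  have := congrArg (fun q : ℚ => (q : ℝ)) hw.2.1
  simp only [Finsupp.sum, Rat.cast_sum, Rat.cast_one] at this
  simpa [Finsupp.sum, this] using tsum_cast_mul w 1

section Combine

variable {α : Type*} {f g : ℕ → α → ℝ}

def combine (f : ℕ → α → ℝ) (w : ℕ →₀ ℚ) (a : α) : ℝ := w.sum fun k c => c * f k a

lemma combine_smul_add_smul (s t : ℚ) (w₁ w₂ : ℕ →₀ ℚ) (a : α) :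
    combine f (s • w₁ + t • w₂) a = s * combine f w₁ a + t * combine f w₂ a := by
  simp only [combine]
  rw [Finsupp.sum_add_index' (fun _ => by simp) (fun _ _ _ => by push_cast; ring),
    Finsupp.sum_smul_index' (fun _ => by simp), Finsupp.sum_smul_index' (fun _ => by simp),
    Finsupp.mul_sum, Finsupp.mul_sum]
  simp only [smul_eq_mul, Rat.cast_mul, mul_assoc]

lemma combine_nonneg (hf : ∀ k a, 0 ≤ f k a) {w : ℕ →₀ ℚ} (hw : ∀ k, 0 ≤ w k) (a : α) :
    0 ≤ combine f w a :=
  Finset.sum_nonneg fun k _ => mul_nonneg (Rat.cast_nonneg.2 (hw k)) (hf k a)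

lemma combine_eq_add {a : α} {c : ℝ} (h : ∀ k, g k a = f k a + c) {n : ℕ} {w : ℕ →₀ ℚ}
    (hw : w ∈ tailWeights n) : combine g w a = combine f w a + c := by
  have hsum : (w.sum fun _ q => (q : ℝ)) = 1 := by
    simpa [Finsupp.sum] using congrArg (fun q : ℚ => (q : ℝ)) hw.2.1
  simp only [combine, h, mul_add, Finsupp.sum_add, ← Finsupp.sum_mul, hsum, one_mul]

lemma measurable_combine [MeasurableSpace α] (hf : ∀ k, Measurable (f k)) (w : ℕ →₀ ℚ) :
    Measurable (combine f w) :=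
  Finset.measurable_sum _ fun k _ => (hf k).const_mul _

end Combine

section Selection

open scoped Classical

variable {X Y : Type*} [MeasurableSpace X] [MeasurableSpace Y] (P : Kernel X Y)
  {f : ℕ → X × Y → ℝ}

variable (f) in
def expCost (x : X) (w : ℕ →₀ ℚ) : ℝ≥0∞ :=
  ∫⁻ y, .ofReal (exp (-combine f w (x, y))) ∂(P x)

variable (f) in
def tailInf (n : ℕ) (x : X) : ℝ≥0∞ := ⨅ w ∈ tailWeights n, expCost P f x w

variable (f) in
def supTailInf (x : X) : ℝ≥0∞ := ⨆ n, tailInf P f n x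

lemma tailInf_le_expCost {n : ℕ} {w : ℕ →₀ ℚ} (hw : w ∈ tailWeights n) (x : X) :
    tailInf P f n x ≤ expCost P f x w :=
  biInf_le _ hw

lemma tailInf_mono (x : X) : Monotone fun n => tailInf P f n x :=
  fun _ _ hmn => biInf_mono fun _ hw => tailWeights_antitone hmn hw

lemma expCost_le_measure_univ (hf₀ : ∀ k z, 0 ≤ f k z) {w : ℕ →₀ ℚ} (hw : ∀ k, 0 ≤ w k)
    (x : X) : expCost P f x w ≤ P x Set.univ :=
  lintegral_ofReal_exp_neg_le_measure_univ fun y => combine_nonneg hf₀ hw (x, y)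

variable [IsFiniteKernel P]

lemma supTailInf_ne_top (hf₀ : ∀ k z, 0 ≤ f k z) (x : X) : supTailInf P f x ≠ ∞ :=
  ne_top_of_le_ne_top (measure_ne_top (P x) Set.univ) <| iSup_le fun n =>
    (tailInf_le_expCost P (single_mem_tailWeights n) x).trans
      (expCost_le_measure_univ P hf₀ (single_mem_tailWeights n).1 x)

lemma exists_level (hf₀ : ∀ k z, 0 ≤ f k z) (j : ℕ) (x : X) :
    ∃ n, j ≤ n ∧ supTailInf P f x ≤ tailInf P f n x + 4⁻¹ ^ j := by
  have hlim : Tendsto (fun n => tailInf P f n x + 4⁻¹ ^ j) atTop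
      (𝓝 (supTailInf P f x + 4⁻¹ ^ j)) :=
    (tendsto_atTop_iSup (tailInf_mono P x)).add_const _
  have hlt : supTailInf P f x < supTailInf P f x + 4⁻¹ ^ j :=
    ENNReal.lt_add_right (supTailInf_ne_top P hf₀ x) (by simp)
  exact ((eventually_ge_atTop j).and (hlim.eventually_const_lt hlt)).exists.imp
    fun n hn => ⟨hn.1, hn.2.le⟩

def level (hf₀ : ∀ k z, 0 ≤ f k z) (j : ℕ) (x : X) : ℕ := Nat.find (exists_level P hf₀ j x)

variable (hf₀ : ∀ k z, 0 ≤ f k z)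

lemma le_level (j : ℕ) (x : X) : j ≤ level P hf₀ j x := (Nat.find_spec (exists_level P hf₀ j x)).1

lemma supTailInf_le_tailInf_level (j : ℕ) (x : X) :
    supTailInf P f x ≤ tailInf P f (level P hf₀ j x) x + 4⁻¹ ^ j :=
  (Nat.find_spec (exists_level P hf₀ j x)).2

lemma level_mono {i j : ℕ} (hij : i ≤ j) (x : X) : level P hf₀ i x ≤ level P hf₀ j x :=
  Nat.find_min' _ ⟨(hij.trans (le_level P hf₀ j x)),
    (supTailInf_le_tailInf_level P hf₀ j x).trans
      (add_le_add le_rfl (inv_four_pow_anti hij))⟩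

def enum : ℕ → (ℕ →₀ ℚ) := (exists_surjective_nat _).choose

lemma enum_surjective : Function.Surjective enum := (exists_surjective_nat _).choose_spec

lemma exists_weightIndex (j : ℕ) (x : X) :
    ∃ m, enum m ∈ tailWeights (level P hf₀ j x) ∧
      expCost P f x (enum m) ≤ tailInf P f (level P hf₀ j x) x + 4⁻¹ ^ j := by
  set n := level P hf₀ j x
  have hne : tailInf P f n x ≠ ∞ := ne_top_of_le_ne_top (supTailInf_ne_top P hf₀ x)
    (le_iSup (fun n => tailInf P f n x) n)
  obtain ⟨w, hw⟩ := iInf_lt_iff.1 (ENNReal.lt_add_right hne (by simp : (4⁻¹ : ℝ≥0∞) ^ j ≠ 0))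
  obtain ⟨hw, hlt⟩ := iInf_lt_iff.1 hw
  obtain ⟨m, rfl⟩ := enum_surjective w
  exact ⟨m, hw, hlt.le⟩

def weightIndex (j : ℕ) (x : X) : ℕ := Nat.find (exists_weightIndex P hf₀ j x)

def weight (j : ℕ) (x : X) : ℕ →₀ ℚ := enum (weightIndex P hf₀ j x)

lemma weight_mem_tailWeights_level (j : ℕ) (x : X) :
    weight P hf₀ j x ∈ tailWeights (level P hf₀ j x) :=
  (Nat.find_spec (exists_weightIndex P hf₀ j x)).1

lemma weight_mem_tailWeights (j : ℕ) (x : X) : weight P hf₀ j x ∈ tailWeights j :=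
  tailWeights_antitone (le_level P hf₀ j x) (weight_mem_tailWeights_level P hf₀ j x)

lemma expCost_weight_le (j : ℕ) (x : X) :
    expCost P f x (weight P hf₀ j x) ≤ supTailInf P f x + 4⁻¹ ^ j :=
  (Nat.find_spec (exists_weightIndex P hf₀ j x)).2.trans
    (add_le_add_left (le_iSup (fun n => tailInf P f n x) _) _)

lemma lintegral_sq_exp_neg_combine_weight_sub_le (hf : ∀ k, Measurable (f k)) {i j : ℕ}
    (hij : i ≤ j) (x : X) :
    ∫⁻ y, .ofReal ((exp (-combine f (weight P hf₀ i x) (x, y))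
      - exp (-combine f (weight P hf₀ j x) (x, y))) ^ 2) ∂(P x) ≤ 16 * 4⁻¹ ^ i := by
  set w₁ := weight P hf₀ i x
  set w₂ := weight P hf₀ j x
  set ε : ℝ≥0∞ := 4⁻¹ ^ i
  have h₁ : w₁ ∈ tailWeights (level P hf₀ i x) := weight_mem_tailWeights_level P hf₀ i x
  have h₂ : w₂ ∈ tailWeights (level P hf₀ i x) :=
    tailWeights_antitone (level_mono P hf₀ hij x) (weight_mem_tailWeights_level P hf₀ j x)
  have hmid : (2⁻¹ : ℚ) • w₁ + (2⁻¹ : ℚ) • w₂ ∈ tailWeights (level P hf₀ i x) :=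
    convex_tailWeights _ h₁ h₂ (by norm_num) (by norm_num) (by norm_num)
  have hcost : (expCost P f x w₁ + expCost P f x w₂) / 2
      ≤ expCost P f x ((2⁻¹ : ℚ) • w₁ + (2⁻¹ : ℚ) • w₂) + 2 * ε := by
    have hw₂ : expCost P f x w₂ ≤ supTailInf P f x + ε :=
      (expCost_weight_le P hf₀ j x).trans (add_le_add le_rfl (inv_four_pow_anti hij))
    calc (expCost P f x w₁ + expCost P f x w₂) / 2 ≤ supTailInf P f x + ε := by
          rw [ENNReal.div_le_iff two_ne_zero ENNReal.ofNat_ne_top, mul_two]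
          exact add_le_add (expCost_weight_le P hf₀ i x) hw₂
      _ ≤ tailInf P f (level P hf₀ i x) x + ε + ε :=
          add_le_add (supTailInf_le_tailInf_level P hf₀ i x) le_rfl
      _ ≤ expCost P f x ((2⁻¹ : ℚ) • w₁ + (2⁻¹ : ℚ) • w₂) + 2 * ε := by
          rw [add_assoc, ← two_mul]
          exact add_le_add (tailInf_le_expCost P hmid x) le_rfl
  have hmidpt : ∀ y, combine f ((2⁻¹ : ℚ) • w₁ + (2⁻¹ : ℚ) • w₂) (x, y)
      = (combine f w₁ (x, y) + combine f w₂ (x, y)) / 2 := fun y => by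
    rw [combine_smul_add_smul]; push_cast; ring
  simp only [expCost, hmidpt] at hcost
  calc _ ≤ 8 * (2 * ε) :=
        lintegral_sq_exp_neg_sub_le ((measurable_combine hf w₁).comp measurable_prodMk_left)
          ((measurable_combine hf w₂).comp measurable_prodMk_left)
          (fun y => combine_nonneg hf₀ h₁.1 (x, y)) (fun y => combine_nonneg hf₀ h₂.1 (x, y)) hcost
    _ = 16 * ε := by rw [← mul_assoc]; norm_num

lemma ae_exists_tendsto_exp_neg_combine_weight (hf : ∀ k, Measurable (f k)) (x : X) :
    ∀ᵐ y ∂(P x), ∃ l, Tendsto (fun j => exp (-combine f (weight P hf₀ j x) (x, y))) atTop (𝓝 l) :=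
  ae_exists_tendsto_of_lintegral_sq_sub_le
    (fun j => ((measurable_combine hf _).comp measurable_prodMk_left).neg.exp) (by norm_num)
    fun i => lintegral_sq_exp_neg_combine_weight_sub_le P hf₀ hf i.le_succ x

lemma measurable_expCost (hf : ∀ k, Measurable (f k)) (w : ℕ →₀ ℚ) :
    Measurable fun x => expCost P f x w :=
  ((measurable_combine hf w).neg.exp.ennreal_ofReal).lintegral_kernel_prod_right

lemma measurable_tailInf (hf : ∀ k, Measurable (f k)) (n : ℕ) : Measurable (tailInf P f n) :=
  .biInf _ (Set.to_countable _) fun w _ => measurable_expCost P hf w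

lemma measurable_level (hf : ∀ k, Measurable (f k)) (j : ℕ) : Measurable (level P hf₀ j) :=
  measurable_find _ fun n => (MeasurableSet.const (j ≤ n)).inter <|
    measurableSet_le (.iSup fun n => measurable_tailInf P hf n)
      ((measurable_tailInf P hf n).add_const _)

lemma measurable_weightIndex (hf : ∀ k, Measurable (f k)) (j : ℕ) :
    Measurable (weightIndex P hf₀ j) :=
  measurable_find _ fun m => (measurable_level P hf₀ hf j
    (.of_discrete (s := {n | enum m ∈ tailWeights n}))).inter <|
    measurableSet_le (measurable_expCost P hf _)
      ((measurable_comp_index (measurable_tailInf P hf) (measurable_level P hf₀ hf j)).add_const _)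

lemma measurable_weight_apply (hf : ∀ k, Measurable (f k)) (j k : ℕ) :
    Measurable fun x => (weight P hf₀ j x k : ℝ) :=
  (measurable_from_nat (f := fun m => (enum m k : ℝ))).comp (measurable_weightIndex P hf₀ hf j)

lemma measurable_combine_weight (hf : ∀ k, Measurable (f k)) {g : ℕ → X × Y → ℝ}
    (hg : ∀ k, Measurable (g k)) (j : ℕ) :
    Measurable fun z : X × Y => combine g (weight P hf₀ j z.1) z :=
  measurable_comp_index (fun m => measurable_combine hg (enum m))
    ((measurable_weightIndex P hf₀ hf j).comp measurable_fst)

end Selection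

end Komlos

open Komlos in
theorem measurable_komlos_general
    {X Y : Type*} [MeasurableSpace X] [MeasurableSpace Y]
    (Yn : ℕ → X × Y → ℝ) (hYn : ∀ n, Measurable (Yn n))
    (P : Kernel X Y) [IsMarkovKernel P]
    (C : X × Y → ℝ) (hC : Measurable C)
    (hbound : ∀ x : X, ∀ᵐ y ∂(P x), ∀ n, C (x, y) ≤ Yn n (x, y)) :
    ∃ (lam : ℕ → ℕ → X → ℝ) (Ytil : ℕ → X × Y → ℝ) (Ylim : X × Y → EReal),
      (∀ n k, Measurable (lam n k)) ∧
      (∀ n, Measurable (Ytil n)) ∧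
      Measurable Ylim ∧
      (∀ n k x, 0 ≤ lam n k x ∧ lam n k x ≤ 1) ∧
      (∀ n k x, k < n → lam n k x = 0) ∧
      (∀ n x, {k | lam n k x ≠ 0}.Finite) ∧
      (∀ n x, ∑' k, lam n k x = 1) ∧
      (∀ n x y, Ytil n (x, y) = ∑' k, lam n k x * Yn k (x, y)) ∧
      (∀ x : X, ∀ᵐ y ∂(P x),
        Tendsto (fun n => ((Ytil n (x, y) : ℝ) : EReal)) atTop (nhds (Ylim (x, y)))) := by
  set f : ℕ → X × Y → ℝ := fun k z => max (Yn k z - C z) 0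
  have hf : ∀ k, Measurable (f k) := fun k => ((hYn k).sub hC).max measurable_const
  have hf₀ : ∀ k z, 0 ≤ f k z := fun k z => le_max_right _ _
  have hw : ∀ n x, weight P hf₀ n x ∈ tailWeights n := weight_mem_tailWeights P hf₀
  set Ytil : ℕ → X × Y → ℝ := fun n z => combine Yn (weight P hf₀ n z.1) z
  have hYtil : ∀ n, Measurable (Ytil n) := measurable_combine_weight P hf₀ hf hYn
  refine ⟨fun n k x => weight P hf₀ n x k, Ytil,
    fun z => limsup (fun n => (Ytil n z : EReal)) atTop,
    measurable_weight_apply P hf₀ hf, hYtil, .limsup fun n => (hYtil n).coe_real_ereal,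
    fun n k x => ⟨Rat.cast_nonneg.2 ((hw n x).1 k),
      (Rat.cast_le.2 (le_one_of_mem_tailWeights (hw n x) k)).trans_eq Rat.cast_one⟩,
    fun n k x hk => by simp [(hw n x).2.2 k hk],
    fun n x => (weight P hf₀ n x).support.finite_toSet.subset fun k hk => by simpa using hk,
    fun n x => tsum_cast_eq_one_of_mem_tailWeights (hw n x),
    fun n x y => (tsum_cast_mul _ _).symm, fun x => ?_⟩
  filter_upwards [ae_exists_tendsto_exp_neg_combine_weight P hf₀ hf x, hbound x]
    with y ⟨l, hl⟩ hCY
  have hsplit : ∀ n, Ytil n (x, y) = combine f (weight P hf₀ n x) (x, y) + C (x, y) := fun n =>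
    combine_eq_add (fun k => by simp [f, hCY k]) (hw n x)
  have hexp : Tendsto (fun n => exp (-Ytil n (x, y))) atTop (𝓝 (l * exp (-C (x, y)))) := by
    simpa only [hsplit, neg_add, exp_add] using hl.mul_const (exp (-C (x, y)))
  have hlim := tendsto_coe_ereal_of_tendsto_exp_neg hexp
  exact hlim.limsup_eq ▸ hlim

/-- Measurable Komlós-type lemma with parameters: given measurable `Y^n : X × Y → ℝ`,
a measurable kernel `P : X → P(Y)` and a measurable lower bound `C` with
`inf_n Y^n(x,·) ≥ C(x,·)` `P(x)`-a.s. for every `x`, there are forward convex combinations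
`Ỹ^n(x,·) = ∑_k λ^n_k(x) Y^k(x,·) ∈ conv(Y^n(x,·), Y^{n+1}(x,·), …)` with measurable weights,
converging `P(x)`-a.s. (in `ℝ ∪ {+∞}`) for every `x` to a measurable limit `Ỹ`. -/
theorem measurable_komlos
    {X Y : Type*} [MeasurableSpace X] [MeasurableSpace Y]
    [StandardBorelSpace X] [StandardBorelSpace Y]
    (Yn : ℕ → X × Y → ℝ) (hYn : ∀ n, Measurable (Yn n))
    (P : Kernel X Y) [IsMarkovKernel P]
    (C : X × Y → ℝ) (hC : Measurable C)
    (hbound : ∀ x : X, ∀ᵐ y ∂(P x), ∀ n, C (x, y) ≤ Yn n (x, y)) :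
    ∃ (lam : ℕ → ℕ → X → ℝ) (Ytil : ℕ → X × Y → ℝ) (Ylim : X × Y → EReal),
      (∀ n k, Measurable (lam n k)) ∧
      (∀ n, Measurable (Ytil n)) ∧
      Measurable Ylim ∧
      (∀ n k x, 0 ≤ lam n k x ∧ lam n k x ≤ 1) ∧
      (∀ n k x, k < n → lam n k x = 0) ∧
      (∀ n x, {k | lam n k x ≠ 0}.Finite) ∧
      (∀ n x, ∑' k, lam n k x = 1) ∧
      (∀ n x y, Ytil n (x, y) = ∑' k, lam n k x * Yn k (x, y)) ∧
      (∀ x : X, ∀ᵐ y ∂(P x),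
        Tendsto (fun n => ((Ytil n (x, y) : ℝ) : EReal)) atTop (nhds (Ylim (x, y)))) :=
  measurable_komlos_general Yn hYn P C hC hbound
end
end

section
/- Multidimensional Choquet capacitability theorem: For i ∈ {1,...,N}, let H^i ⊆ G^i be sets of functions from X^i to [−∞,∞], with H^i a lattice and G^i closed under suprema of increasing sequences and infima of arbitrary sequences; let H^i_δ be the set of infima of sequences in H^i. Let Φ : ∏_i G^i → ℝ be increasing in all entries, continuous along N-tuples of decreasing sequences in the H^i's and along N-tuples of increasing sequences in the G^i's. Extend Φ to arbitrary functions by Φ̂(Y^1,...,Y^N) := inf{Φ(X^1,...,X^N) : X^i ≥ Y^i, X^i ∈ G^i}. Then for any H^i-Suslin functions X^i, Φ̂(X^1,...,X^N) = sup{Φ(Y^1,...,Y^N) : Y^i ≤ X^i, Y^i ∈ H^i_δ}. -/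
open Filter

noncomputable section

/-- A function is `H`-Suslin if it is obtained from functions in `H` via the Suslin
operation (supremum over branches of the infima along a Suslin scheme). -/
def SuslinFn {α : Type*} (H : Set (α → EReal)) (f : α → EReal) : Prop :=
  ∃ u : List ℕ → (α → EReal), (∀ l, u l ∈ H) ∧
    f = fun x => ⨆ σ : ℕ → ℕ, ⨅ n : ℕ, u (List.ofFn fun i : Fin n => σ (i : ℕ)) x

/-- The set of infima of sequences in `H`. -/
def deltaSet {α : Type*} (H : Set (α → EReal)) : Set (α → EReal) :=
  {g | ∃ f : ℕ → α → EReal, (∀ n, f n ∈ H) ∧ g = fun x => ⨅ n, f n x}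

/-!
Tuples of functions form a complete lattice in which order, suprema and infima are taken
coordinatewise, so the multidimensional theorem is the one-dimensional Choquet argument run in
that lattice.

Replace the Suslin scheme by its prefix infima, so that it decreases along branches. Continuity of
the outer extension `Φ̂ = outerExt 𝒢 Φ` along increasing sequences lets one choose bounds
`μ 0, μ 1, …` such that restricting the branches to `σ j ≤ μ j` for `j < k` lowers `Φ̂` by less
than `ε`, uniformly in `k`. The suprema `B k` of the scheme over the finitely many bounded segments
of length `k` lie in `H`, decrease and dominate these truncations, so `Φ (⨅ k, B k) ≥ Φ̂ Y - ε` by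
continuity along decreasing sequences. Finally `⨅ k, B k ≤ Y` by König's lemma, i.e. compactness
of `∏ j, {0, …, μ j}`.
-/

open Function Topology

section FiniteLattice

variable {β ι : Type*} [CompleteLattice β] [Fintype ι] [Nonempty ι] {S : Set β} {f : ι → β}

theorem iInf_mem_of_inf_mem (hS : ∀ a ∈ S, ∀ b ∈ S, a ⊓ b ∈ S) (hf : ∀ i, f i ∈ S) :
    ⨅ i, f i ∈ S := by
  rw [← Finset.inf'_univ_eq_ciInf]
  exact Finset.inf'_mem S hS _ _ f fun i _ => hf i

theorem iSup_mem_of_sup_mem (hS : ∀ a ∈ S, ∀ b ∈ S, a ⊔ b ∈ S) (hf : ∀ i, f i ∈ S) :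
    ⨆ i, f i ∈ S := by
  rw [← Finset.sup'_univ_eq_ciSup]
  exact Finset.sup'_mem S hS _ _ f fun i _ => hf i

end FiniteLattice

section OuterExtension

variable {γ : Type*} [CompleteLattice γ] {𝒢 : Set γ} {Φ : γ → ℝ}

variable (𝒢 Φ) in
def outerExt (V : γ) : ℝ :=
  ⨅ Z : {Z // Z ∈ 𝒢 ∧ V ≤ Z}, Φ Z

theorem outerExt_le_apply (hΦ : MonotoneOn Φ 𝒢) {W V Z : γ} (hW : W ∈ 𝒢) (hWV : W ≤ V)
    (hZ : Z ∈ 𝒢) (hVZ : V ≤ Z) : outerExt 𝒢 Φ V ≤ Φ Z :=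
  ciInf_le ⟨Φ W, by rintro _ ⟨Z', rfl⟩; exact hΦ hW Z'.2.1 (hWV.trans Z'.2.2)⟩
    (⟨Z, hZ, hVZ⟩ : {Z // Z ∈ 𝒢 ∧ V ≤ Z})

theorem apply_le_outerExt (hΦ : MonotoneOn Φ 𝒢) {W V Z : γ} (hW : W ∈ 𝒢) (hWV : W ≤ V)
    (hZ : Z ∈ 𝒢) (hVZ : V ≤ Z) : Φ W ≤ outerExt 𝒢 Φ V :=
  have : Nonempty {Z // Z ∈ 𝒢 ∧ V ≤ Z} := ⟨⟨Z, hZ, hVZ⟩⟩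
  le_ciInf fun Z' => hΦ hW Z'.2.1 (hWV.trans Z'.2.2)

theorem exists_outerExt_iSup_sub_le (h𝒢inf : ∀ f : ℕ → γ, (∀ n, f n ∈ 𝒢) → ⨅ n, f n ∈ 𝒢)
    (h𝒢sup : ∀ f : ℕ → γ, (∀ n, f n ∈ 𝒢) → Monotone f → ⨆ n, f n ∈ 𝒢) (hΦ : MonotoneOn Φ 𝒢)
    (hinc : ∀ f : ℕ → γ, (∀ n, f n ∈ 𝒢) → Monotone f →
      Tendsto (Φ ∘ f) atTop (𝓝 (Φ (⨆ n, f n))))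
    {V : ℕ → γ} (hV : Monotone V) {W Z : γ} (hW : W ∈ 𝒢) (hWV : W ≤ ⨆ n, V n) (hZ : Z ∈ 𝒢)
    (hVZ : ⨆ n, V n ≤ Z) {δ : ℝ} (hδ : 0 < δ) :
    ∃ n, outerExt 𝒢 Φ (⨆ n, V n) - δ ≤ outerExt 𝒢 Φ (V n) := by
  by_contra! hlt
  have hZ' (n : ℕ) : ∃ Z' : {Z' // Z' ∈ 𝒢 ∧ V n ≤ Z'}, Φ Z' < outerExt 𝒢 Φ (⨆ n, V n) - δ :=
    have : Nonempty {Z' // Z' ∈ 𝒢 ∧ V n ≤ Z'} := ⟨⟨Z, hZ, (le_iSup V n).trans hVZ⟩⟩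
    exists_lt_of_ciInf_lt (hlt n)
  choose Z' hZ' using hZ'
  -- the tail infima of the near-optimal `Z' n` increase and still dominate `V`
  set A : ℕ → γ := fun n => ⨅ m, (Z' (n + m)).1
  have hA𝒢 (n : ℕ) : A n ∈ 𝒢 := h𝒢inf _ fun m => (Z' (n + m)).2.1
  have hA : Monotone A := fun a b hab =>
    le_iInf fun m => iInf_le_of_le (b - a + m) (by rw [show a + (b - a + m) = b + m by omega])
  have hVA (n : ℕ) : V n ≤ A n :=
    le_iInf fun m => (hV (Nat.le_add_right n m)).trans (Z' (n + m)).2.2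
  have hlim : Φ (⨆ n, A n) ≤ outerExt 𝒢 Φ (⨆ n, V n) - δ :=
    le_of_tendsto' (hinc A hA𝒢 hA) fun n =>
      (hΦ (hA𝒢 n) (Z' n).2.1 (iInf_le _ 0)).trans (hZ' n).le
  have := outerExt_le_apply hΦ hW hWV (h𝒢sup A hA𝒢 hA) (iSup_mono hVA)
  linarith

end OuterExtension

section SuslinScheme

variable {β : Type*} [CompleteLattice β]

def initSeg (σ : ℕ → ℕ) (n : ℕ) : List ℕ :=
  List.ofFn fun i : Fin n => σ i

theorem take_initSeg (σ : ℕ → ℕ) (n m : ℕ) : (initSeg σ n).take m = initSeg σ (min m n) := by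
  apply List.ext_getElem <;> simp [initSeg]

def suslin (v : List ℕ → β) : β :=
  ⨆ σ : ℕ → ℕ, ⨅ n, v (initSeg σ n)

theorem suslin_le_nil (v : List ℕ → β) : suslin v ≤ v [] :=
  iSup_le fun _ => iInf_le _ 0

def prefixInf (u : List ℕ → β) (l : List ℕ) : β :=
  ⨅ k : Fin (l.length + 1), u (l.take k)

theorem prefixInf_mem {S : Set β} (hS : ∀ a ∈ S, ∀ b ∈ S, a ⊓ b ∈ S) {u : List ℕ → β}
    (hu : ∀ l, u l ∈ S) (l : List ℕ) : prefixInf u l ∈ S :=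
  iInf_mem_of_inf_mem hS fun _ => hu _

theorem prefixInf_le (u : List ℕ → β) (l : List ℕ) : prefixInf u l ≤ u l :=
  iInf_le_of_le ⟨l.length, Nat.lt_succ_self _⟩ (by rw [List.take_length])

theorem prefixInf_le_take (u : List ℕ → β) (l : List ℕ) (m : ℕ) :
    prefixInf u l ≤ prefixInf u (l.take m) :=
  le_iInf fun k => iInf_le_of_le
    ⟨min k m, by have := k.isLt; simp only [List.length_take] at this; omega⟩
    (by rw [List.take_take])

theorem suslin_prefixInf (u : List ℕ → β) : suslin (prefixInf u) = suslin u := by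
  refine iSup_congr fun σ => le_antisymm (iInf_mono fun n => prefixInf_le u _) ?_
  exact le_iInf fun n => le_iInf fun k => by rw [take_initSeg]; exact iInf_le _ _

def suslinTrunc (v : List ℕ → β) (μ : ℕ → ℕ) (k : ℕ) : β :=
  ⨆ σ : {σ : ℕ → ℕ // ∀ j < k, σ j ≤ μ j}, ⨅ n, v (initSeg σ n)

variable (v : List ℕ → β) (μ : ℕ → ℕ) (k : ℕ)

theorem suslinTrunc_zero : suslinTrunc v μ 0 = suslin v :=
  le_antisymm (iSup_le fun σ => le_iSup_of_le σ.1 le_rfl)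
    (iSup_le fun σ => le_iSup_of_le ⟨σ, fun _ h => absurd h (Nat.not_lt_zero _)⟩ le_rfl)

theorem suslinTrunc_le_suslin : suslinTrunc v μ k ≤ suslin v :=
  iSup_le fun σ => le_iSup_of_le σ.1 le_rfl

theorem iInf_initSeg_zero_le_suslinTrunc : ⨅ n, v (initSeg (fun _ => 0) n) ≤ suslinTrunc v μ k :=
  le_iSup_of_le ⟨fun _ => 0, fun _ _ => Nat.zero_le _⟩ le_rfl

theorem suslinTrunc_congr {μ μ' : ℕ → ℕ} {k : ℕ} (h : ∀ j < k, μ j = μ' j) :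
    suslinTrunc v μ k = suslinTrunc v μ' k :=
  le_antisymm (iSup_le fun σ => le_iSup_of_le ⟨σ.1, fun j hj => h j hj ▸ σ.2 j hj⟩ le_rfl)
    (iSup_le fun σ => le_iSup_of_le ⟨σ.1, fun j hj => (h j hj).symm ▸ σ.2 j hj⟩ le_rfl)

theorem monotone_suslinTrunc_update : Monotone fun m => suslinTrunc v (update μ k m) (k + 1) := by
  intro m m' hm
  refine iSup_le fun σ => le_iSup_of_le ⟨σ.1, fun j hj => (σ.2 j hj).trans ?_⟩ le_rfl
  rcases eq_or_ne j k with rfl | hjk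
  · simpa using hm
  · simp [update_of_ne hjk]

theorem iSup_suslinTrunc_update :
    ⨆ m, suslinTrunc v (update μ k m) (k + 1) = suslinTrunc v μ k := by
  refine le_antisymm (iSup_le fun m => iSup_le fun σ => ?_) (iSup_le fun σ => ?_)
  · refine le_iSup_of_le ⟨σ.1, fun j hj => ?_⟩ le_rfl
    simpa [update_of_ne hj.ne] using σ.2 j (Nat.lt_succ_of_lt hj)
  · refine le_iSup_of_le (σ.1 k) (le_iSup_of_le ⟨σ.1, fun j hj => ?_⟩ le_rfl)
    rcases Nat.lt_succ_iff_lt_or_eq.mp hj with hjk | rfl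
    · simpa [update_of_ne hjk.ne] using σ.2 j hjk
    · simp

def boundedSup : β :=
  ⨆ j : (s : Fin k) → Fin (μ s + 1), v (List.ofFn fun s => (j s : ℕ))

theorem suslinTrunc_le_boundedSup : suslinTrunc v μ k ≤ boundedSup v μ k :=
  iSup_le fun σ => (iInf_le _ k).trans <|
    le_iSup_of_le (fun s => ⟨σ.1 s, Nat.lt_succ_of_le (σ.2 s s.isLt)⟩) le_rfl

variable {v}

theorem boundedSup_mem {S : Set β} (hS : ∀ a ∈ S, ∀ b ∈ S, a ⊔ b ∈ S) (hv : ∀ l, v l ∈ S) :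
    boundedSup v μ k ∈ S :=
  iSup_mem_of_sup_mem hS fun _ => hv _

theorem boundedSup_antitone (hv : ∀ l m, v l ≤ v (l.take m)) : Antitone (boundedSup v μ) := by
  refine antitone_nat_of_succ_le fun k => iSup_le fun j => (hv _ k).trans ?_
  refine le_iSup_of_le (fun s => j s.castSucc) (le_of_eq (congrArg v ?_))
  exact List.ext_getElem (by simp) fun i _ _ => by
    simp only [List.getElem_take, List.getElem_ofFn]; rfl

end SuslinScheme

theorem exists_forall_initSeg_of_forall_ofFn (μ : ℕ → ℕ) {p : List ℕ → Prop}
    (hp : ∀ l m, p l → p (l.take m))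
    (h : ∀ k, ∃ j : (s : Fin k) → Fin (μ s + 1), p (List.ofFn fun s => (j s : ℕ))) :
    ∃ σ : ℕ → ℕ, ∀ n, p (initSeg σ n) := by
  let C (k : ℕ) : Set ((n : ℕ) → Fin (μ n + 1)) := {σ | p (initSeg (fun n => σ n) k)}
  have hC_closed (k : ℕ) : IsClosed (C k) :=
    IsClosed.preimage (f := fun (σ : (n : ℕ) → Fin (μ n + 1)) (s : Fin k) => σ s)
      (continuous_pi fun s => continuous_apply (s : ℕ))
      (isClosed_discrete {j : (s : Fin k) → Fin (μ s + 1) | p (List.ofFn fun s => (j s : ℕ))})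
  have hC_ne (k : ℕ) : (C k).Nonempty := by
    obtain ⟨j, hj⟩ := h k
    exact ⟨fun n => if hn : n < k then j ⟨n, hn⟩ else 0, by simpa [C, initSeg] using hj⟩
  have hC_anti (k : ℕ) : C (k + 1) ⊆ C k := fun σ hσ => by
    simpa [C, take_initSeg] using hp _ k hσ
  obtain ⟨σ, hσ⟩ := IsCompact.nonempty_iInter_of_sequence_nonempty_isCompact_isClosed C hC_anti
    hC_ne (hC_closed 0).isCompact hC_closed
  exact ⟨fun n => σ n, Set.mem_iInter.mp hσ⟩

def HasKonigProperty (β : Type*) [CompleteLattice β] : Prop :=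
  ∀ v : List ℕ → β, (∀ l m, v l ≤ v (l.take m)) → ∀ μ : ℕ → ℕ, ⨅ k, boundedSup v μ k ≤ suslin v

theorem CompleteLinearOrder.hasKonigProperty (β : Type*) [CompleteLinearOrder β] :
    HasKonigProperty β := by
  intro v hv μ
  have hseg (k : ℕ) : ∃ j : (s : Fin k) → Fin (μ s + 1),
      ⨅ k, boundedSup v μ k ≤ v (List.ofFn fun s => (j s : ℕ)) := by
    -- a finite supremum in a linear order is attained
    obtain ⟨j, hj⟩ := exists_eq_ciSup_of_finite
      (f := fun j : (s : Fin k) → Fin (μ s + 1) => v (List.ofFn fun s => (j s : ℕ)))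
    exact ⟨j, (iInf_le _ k).trans hj.ge⟩
  obtain ⟨σ, hσ⟩ := exists_forall_initSeg_of_forall_ofFn μ
    (p := fun l => ⨅ k, boundedSup v μ k ≤ v l) (fun l m h => h.trans (hv l m)) hseg
  exact le_iSup_of_le σ (le_iInf hσ)

theorem HasKonigProperty.pi {A : Type*} {β : A → Type*} [∀ a, CompleteLattice (β a)]
    (h : ∀ a, HasKonigProperty (β a)) : HasKonigProperty (∀ a, β a) := fun v hv μ a => by
  simpa [boundedSup, suslin, iInf_apply, iSup_apply] using
    h a (fun l => v l a) (fun l m => hv l m a) μ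

theorem exists_forall_of_forall_exists_update {P : ℕ → (ℕ → ℕ) → Prop}
    (hP : ∀ k μ μ', (∀ j ≤ k, μ j = μ' j) → P k μ → P k μ')
    (h : ∀ k μ, ∃ m, P k (update μ k m)) : ∃ μ, ∀ k, P k μ := by
  choose F hF using h
  let ν : ℕ → ℕ → ℕ := fun k => Nat.rec (fun _ => 0) (fun k ν => update ν k (F k ν)) k
  have hν : ∀ k, ∀ j < k, ν k j = ν (j + 1) j := by
    intro k
    induction k with
    | zero => simp
    | succ k ih =>
      intro j hj
      rcases Nat.lt_succ_iff_lt_or_eq.mp hj with hjk | rfl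
      · exact (update_of_ne hjk.ne _ _).trans (ih j hjk)
      · rfl
  exact ⟨fun k => ν (k + 1) k,
    fun k => hP k _ _ (fun j hj => hν (k + 1) j (Nat.lt_succ_of_le hj)) (hF k (ν k))⟩

section Capacitability

variable {γ : Type*} [CompleteLattice γ] {ℋ 𝒢 : Set γ} {Φ : γ → ℝ}
  (h𝒢inf : ∀ f : ℕ → γ, (∀ n, f n ∈ 𝒢) → ⨅ n, f n ∈ 𝒢)
  (h𝒢sup : ∀ f : ℕ → γ, (∀ n, f n ∈ 𝒢) → Monotone f → ⨆ n, f n ∈ 𝒢)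
  (hΦ : MonotoneOn Φ 𝒢)
  (hinc : ∀ f : ℕ → γ, (∀ n, f n ∈ 𝒢) → Monotone f → Tendsto (Φ ∘ f) atTop (𝓝 (Φ (⨆ n, f n))))
include h𝒢inf h𝒢sup hΦ hinc

theorem exists_forall_sub_le_outerExt_suslinTrunc {v : List ℕ → γ} (hv : ∀ l, v l ∈ 𝒢) {ε : ℝ}
    (hε : 0 < ε) :
    ∃ μ : ℕ → ℕ, ∀ k, outerExt 𝒢 Φ (suslin v) - ε ≤ outerExt 𝒢 Φ (suslinTrunc v μ k) := by
  set c := fun μ k => outerExt 𝒢 Φ (suslinTrunc v μ k)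
  have hlo𝒢 : ⨅ n, v (initSeg (fun _ => 0) n) ∈ 𝒢 := h𝒢inf _ fun _ => hv _
  have hstep (k : ℕ) (μ : ℕ → ℕ) : ∃ m, c μ k - ε / 2 ^ (k + 1) ≤ c (update μ k m) (k + 1) := by
    have := exists_outerExt_iSup_sub_le h𝒢inf h𝒢sup hΦ hinc (monotone_suslinTrunc_update v μ k)
      hlo𝒢 ((iInf_initSeg_zero_le_suslinTrunc v μ k).trans (iSup_suslinTrunc_update v μ k).ge)
      (hv []) (((iSup_suslinTrunc_update v μ k).trans_le (suslinTrunc_le_suslin v μ k)).trans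
        (suslin_le_nil v)) (by positivity : (0 : ℝ) < ε / 2 ^ (k + 1))
    simpa only [iSup_suslinTrunc_update] using this
  obtain ⟨μ, hμ⟩ := exists_forall_of_forall_exists_update
    (P := fun k μ => c μ k - ε / 2 ^ (k + 1) ≤ c μ (k + 1))
    (fun k μ μ' h => by
      simp only [c, suslinTrunc_congr v (fun j hj => h j hj.le),
        suslinTrunc_congr v (fun j hj => h j (Nat.lt_succ_iff.mp hj)), imp_self])
    fun k μ => by
      obtain ⟨m, hm⟩ := hstep k μ
      have hupd : suslinTrunc v (update μ k m) k = suslinTrunc v μ k :=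
        suslinTrunc_congr v fun j hj => update_of_ne hj.ne m μ
      exact ⟨m, by simpa only [c, hupd] using hm⟩
  -- the losses `ε / 2 ^ (k + 1)` sum to less than `ε`
  have hmono : Monotone fun k => c μ k - ε / 2 ^ k := monotone_nat_of_le_succ fun k => by
    have := hμ k
    have := add_halves (ε / 2 ^ k)
    rw [pow_succ, ← div_div] at *
    linarith
  refine ⟨μ, fun k => ?_⟩
  have := hmono (Nat.zero_le k)
  have : 0 ≤ ε / 2 ^ k := by positivity
  simp only [c, suslinTrunc_zero, pow_zero, div_one] at *
  linarith

theorem exists_iInf_le_suslin_sub_le (hK : HasKonigProperty γ) (hℋ𝒢 : ℋ ⊆ 𝒢)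
    (hℋsup : ∀ a ∈ ℋ, ∀ b ∈ ℋ, a ⊔ b ∈ ℋ)
    (hdec : ∀ f : ℕ → γ, (∀ n, f n ∈ ℋ) → Antitone f → Tendsto (Φ ∘ f) atTop (𝓝 (Φ (⨅ n, f n))))
    {v : List ℕ → γ} (hv : ∀ l, v l ∈ ℋ) (hv_anti : ∀ l m, v l ≤ v (l.take m)) {ε : ℝ}
    (hε : 0 < ε) :
    ∃ f : ℕ → γ, (∀ n, f n ∈ ℋ) ∧ ⨅ n, f n ≤ suslin v ∧
      outerExt 𝒢 Φ (suslin v) - ε ≤ Φ (⨅ n, f n) := by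
  obtain ⟨μ, hμ⟩ := exists_forall_sub_le_outerExt_suslinTrunc h𝒢inf h𝒢sup hΦ hinc
    (fun l => hℋ𝒢 (hv l)) hε
  have hB (k : ℕ) : boundedSup v μ k ∈ ℋ := boundedSup_mem μ k hℋsup hv
  refine ⟨boundedSup v μ, hB, hK v hv_anti μ,
    ge_of_tendsto' (hdec _ hB (boundedSup_antitone μ hv_anti)) fun k => (hμ k).trans ?_⟩
  exact outerExt_le_apply hΦ (h𝒢inf _ fun _ => hℋ𝒢 (hv _))
    (iInf_initSeg_zero_le_suslinTrunc v μ k) (hℋ𝒢 (hB k)) (suslinTrunc_le_boundedSup v μ k)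

theorem outerExt_suslin_eq_iSup (hK : HasKonigProperty γ) (hℋ𝒢 : ℋ ⊆ 𝒢)
    (hℋsup : ∀ a ∈ ℋ, ∀ b ∈ ℋ, a ⊔ b ∈ ℋ) (hℋinf : ∀ a ∈ ℋ, ∀ b ∈ ℋ, a ⊓ b ∈ ℋ)
    (hdec : ∀ f : ℕ → γ, (∀ n, f n ∈ ℋ) → Antitone f → Tendsto (Φ ∘ f) atTop (𝓝 (Φ (⨅ n, f n))))
    {𝒲 : Set γ} (hℋ𝒲 : ∀ f : ℕ → γ, (∀ n, f n ∈ ℋ) → ⨅ n, f n ∈ 𝒲) (h𝒲𝒢 : 𝒲 ⊆ 𝒢)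
    {u : List ℕ → γ} (hu : ∀ l, u l ∈ ℋ) :
    outerExt 𝒢 Φ (suslin u) = ⨆ W : {W // W ∈ 𝒲 ∧ W ≤ suslin u}, Φ W := by
  rw [← suslin_prefixInf]
  have hv (l : List ℕ) : prefixInf u l ∈ ℋ := prefixInf_mem hℋinf hu l
  have : Nonempty {W // W ∈ 𝒲 ∧ W ≤ suslin (prefixInf u)} :=
    ⟨⟨_, hℋ𝒲 _ fun n => hv (initSeg (fun _ => 0) n), le_iSup_of_le (fun _ => 0) le_rfl⟩⟩
  have hhi := suslin_le_nil (prefixInf u)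
  refine le_antisymm (le_of_forall_pos_le_add fun ε hε => ?_)
    (ciSup_le fun W => apply_le_outerExt hΦ (h𝒲𝒢 W.2.1) W.2.2 (hℋ𝒢 (hv [])) hhi)
  obtain ⟨f, hf, hfv, hfε⟩ := exists_iInf_le_suslin_sub_le h𝒢inf h𝒢sup hΦ hinc hK hℋ𝒢 hℋsup
    hdec hv (prefixInf_le_take u) hε
  have hbdd : BddAbove (Set.range fun W : {W // W ∈ 𝒲 ∧ W ≤ suslin (prefixInf u)} => Φ W) :=
    ⟨Φ (prefixInf u []), by
      rintro _ ⟨W, rfl⟩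
      exact hΦ (h𝒲𝒢 W.2.1) (hℋ𝒢 (hv [])) (W.2.2.trans hhi)⟩
  have := le_ciSup hbdd ⟨⨅ n, f n, hℋ𝒲 f hf, hfv⟩
  linarith

end Capacitability

/-- Multidimensional Choquet capacitability theorem (functional form, after
Bartl–Cheridito–Kupper): for an increasing functional `Φ` that is continuous along
decreasing sequences in the lattices `H^i` and along increasing sequences in `G^i`,
the outer extension `Φ̂` of `Φ` is approximated from inside on `H^i`-Suslin functions by
elements of `H^i_δ`. -/
theorem multidimensional_choquet_capacitability
    {N : ℕ} {X : Fin N → Type*}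
    (H G : (i : Fin N) → Set (X i → EReal))
    (hHG : ∀ i, H i ⊆ G i)
    -- each H i is a lattice
    (hHlat : ∀ i, ∀ f ∈ H i, ∀ g ∈ H i, (f ⊔ g) ∈ H i ∧ (f ⊓ g) ∈ H i)
    -- G i is closed under suprema of increasing sequences
    (hGsup : ∀ i, ∀ f : ℕ → X i → EReal, (∀ n, f n ∈ G i) → Monotone f →
      (fun x => ⨆ n, f n x) ∈ G i)
    -- G i is closed under infima of arbitrary sequences
    (hGinf : ∀ i, ∀ f : ℕ → X i → EReal, (∀ n, f n ∈ G i) →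
      (fun x => ⨅ n, f n x) ∈ G i)
    (Φ : ((i : Fin N) → X i → EReal) → ℝ)
    -- Φ is increasing in all entries (on tuples from the G i)
    (hmono : ∀ f g : (i : Fin N) → X i → EReal,
      (∀ i, f i ∈ G i) → (∀ i, g i ∈ G i) → (∀ i, f i ≤ g i) → Φ f ≤ Φ g)
    -- continuity along N-tuples of decreasing sequences in the H i
    (hdec : ∀ f : ℕ → (i : Fin N) → X i → EReal,
      (∀ n i, f n i ∈ H i) → (∀ i, Antitone fun n => f n i) →
      Tendsto (fun n => Φ (f n)) atTop (nhds (Φ (fun i x => ⨅ n, f n i x))))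
    -- continuity along N-tuples of increasing sequences in the G i
    (hinc : ∀ f : ℕ → (i : Fin N) → X i → EReal,
      (∀ n i, f n i ∈ G i) → (∀ i, Monotone fun n => f n i) →
      Tendsto (fun n => Φ (f n)) atTop (nhds (Φ (fun i x => ⨆ n, f n i x))))
    -- the H i-Suslin functions
    (Y : (i : Fin N) → X i → EReal) (hY : ∀ i, SuslinFn (H i) (Y i)) :
    (⨅ Z : {Z : (i : Fin N) → X i → EReal // ∀ i, Z i ∈ G i ∧ Y i ≤ Z i}, Φ Z.1) =
      ⨆ W : {W : (i : Fin N) → X i → EReal // ∀ i, W i ∈ deltaSet (H i) ∧ W i ≤ Y i}, Φ W.1 := by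
  choose u hu hYu using hY
  have hY_eq : Y = suslin fun l i => u i l := by
    ext i x
    simp only [hYu, suslin, initSeg, iSup_apply, iInf_apply]
  have hinf (f : ℕ → (i : Fin N) → X i → EReal) : ⨅ n, f n = fun i x => ⨅ n, f n i x := by
    ext; simp only [iInf_apply]
  have hsup (f : ℕ → (i : Fin N) → X i → EReal) : ⨆ n, f n = fun i x => ⨆ n, f n i x := by
    ext; simp only [iSup_apply]
  have key := outerExt_suslin_eq_iSup (γ := (i : Fin N) → X i → EReal)
    (ℋ := {Z | ∀ i, Z i ∈ H i}) (𝒢 := {Z | ∀ i, Z i ∈ G i}) (Φ := Φ)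
    (fun f hf i => by rw [hinf]; exact hGinf i _ fun n => hf n i)
    (fun f hf hf_mono i => by
      rw [hsup]; exact hGsup i _ (fun n => hf n i) fun _ _ h => hf_mono h i)
    (fun f hf g hg hfg => hmono f g hf hg hfg)
    (fun f hf hf_mono => by rw [hsup]; exact hinc f hf fun i _ _ h => hf_mono h i)
    (HasKonigProperty.pi fun _ => HasKonigProperty.pi fun _ =>
      CompleteLinearOrder.hasKonigProperty EReal)
    (fun Z hZ i => hHG i (hZ i)) (fun _ ha _ hb i => (hHlat i _ (ha i) _ (hb i)).1)
    (fun _ ha _ hb i => (hHlat i _ (ha i) _ (hb i)).2)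
    (fun f hf hf_anti => by rw [hinf]; exact hdec f hf fun i _ _ h => hf_anti h i)
    (𝒲 := {W | ∀ i, W i ∈ deltaSet (H i)})
    (fun f hf i => ⟨fun n => f n i, fun n => hf n i, congrFun (hinf f) i⟩)
    (fun W hW i => by
      obtain ⟨f, hf, hWf⟩ := hW i
      rw [hWf]
      exact hGinf i f fun n => hHG i (hf n))
    (u := fun l i => u i l) fun l i => hu i l
  rw [← hY_eq] at key
  calc _ = outerExt {Z | ∀ i, Z i ∈ G i} Φ Y :=
        (Equiv.subtypeEquivRight fun Z => by simp [forall_and, Pi.le_def]).iInf_congr fun _ => rfl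
    _ = _ := key
    _ = _ := (Equiv.subtypeEquivRight fun W => by simp [forall_and, Pi.le_def]).iSup_congr
        fun _ => rfl
end
end
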